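/- arXiv:1402.3998 — 12 statements merged into one kernel-verified Lean document; each statement's English description precedes it below -/
import Mathlib

section
/- Let n be a positive integer, let p_1,…,p_n be real weights such that P_k ≥ 0 for all k = 1,…,n, let (a_k)_{k=1}^n be a non-negative non-increasing sequence, let (b_k)_{k=1}^n be a non-negative non-decreasing sequence, and let B be a real number with b_k ≤ B for all k. Then ∑_{k=1}^n p_k a_k b_k ≤ B · ∑_{k=1}^n p_k a_k. -/
/-! Since `c k := a k * (B - b k)` is non-negative and non-increasing, the claim is
`0 ≤ ∑ p k * c k`, which follows from Abel summation: the sum equals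
`c (n-1) * P n + ∑ (c k - c (k+1)) * P (k+1)`, a sum of products of non-negative terms. -/

open Finset

theorem sum_mul_nonneg_of_partial_sums_nonneg {R : Type*} [CommRing R] [LinearOrder R]
    [IsStrictOrderedRing R] (n : ℕ) (p c : ℕ → R)
    (hP : ∀ k < n, 0 ≤ ∑ i ∈ range (k + 1), p i)
    (hc0 : ∀ k < n, 0 ≤ c k)
    (hc : ∀ k, k + 1 < n → c (k + 1) ≤ c k) :
    0 ≤ ∑ k ∈ range n, p k * c k := by
  obtain _ | n := n
  · simp
  have abel := sum_range_by_parts c p (n + 1)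
  simp only [smul_eq_mul, add_tsub_cancel_right] at abel
  have last : 0 ≤ c n * ∑ i ∈ range (n + 1), p i :=
    mul_nonneg (hc0 n n.lt_succ_self) (hP n n.lt_succ_self)
  have increments : ∑ i ∈ range n, (c (i + 1) - c i) * ∑ j ∈ range (i + 1), p j ≤ 0 := by
    refine sum_nonpos fun i hi => ?_
    have hi : i + 1 < n + 1 := Nat.succ_lt_succ (mem_range.mp hi)
    exact mul_nonpos_of_nonpos_of_nonneg (sub_nonpos.mpr (hc i hi)) (hP i (by omega))
  simp_rw [mul_comm (p _)]
  linarith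

theorem stmt_0_general (n : ℕ) (p a b : ℕ → ℝ) (B : ℝ)
    (hP : ∀ k < n, 0 ≤ ∑ i ∈ Finset.range (k + 1), p i)
    (ha0 : ∀ k < n, 0 ≤ a k)
    (ha : ∀ i j, i ≤ j → j < n → a j ≤ a i)
    (hb : ∀ i j, i ≤ j → j < n → b i ≤ b j)
    (hbB : ∀ k < n, b k ≤ B) :
    ∑ k ∈ Finset.range n, p k * a k * b k ≤ B * ∑ k ∈ Finset.range n, p k * a k := by
  have key := sum_mul_nonneg_of_partial_sums_nonneg n p (fun k => a k * (B - b k)) hP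
    (fun k hk => mul_nonneg (ha0 k hk) (sub_nonneg.mpr (hbB k hk)))
    (fun k hk => mul_le_mul (ha k (k + 1) k.le_succ hk)
      (sub_le_sub_left (hb k (k + 1) k.le_succ hk) B)
      (sub_nonneg.mpr (hbB (k + 1) hk)) (ha0 k (by omega)))
  have expand : ∑ k ∈ range n, p k * (a k * (B - b k))
      = B * ∑ k ∈ range n, p k * a k - ∑ k ∈ range n, p k * a k * b k := by
    rw [mul_sum, ← sum_sub_distrib]
    exact sum_congr rfl fun _ _ => by ring
  linarith

theorem stmt_0 (n : ℕ) (hn : 0 < n) (p a b : ℕ → ℝ) (B : ℝ)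
    (hP : ∀ k < n, 0 ≤ ∑ i ∈ Finset.range (k + 1), p i)
    (ha0 : ∀ k < n, 0 ≤ a k)
    (ha : ∀ i j, i ≤ j → j < n → a j ≤ a i)
    (hb0 : ∀ k < n, 0 ≤ b k)
    (hb : ∀ i j, i ≤ j → j < n → b i ≤ b j)
    (hbB : ∀ k < n, b k ≤ B) :
    ∑ k ∈ Finset.range n, p k * a k * b k ≤ B * ∑ k ∈ Finset.range n, p k * a k :=
  stmt_0_general n p a b B hP ha0 ha hb hbB
end

section
/- Let n be a positive integer, let p_1,…,p_n be real weights such that P_k ≥ 0 for all k = 1,…,n, and let (a_k)_{k=1}^n and (b_k)_{k=1}^n be non-increasing sequences with 0 < a ≤ a_k ≤ A < ∞ and 0 < b ≤ b_k ≤ B < ∞ for all k. Let p, q > 1 satisfy 1/p + 1/q = 1. Then (∑_{k=1}^n p_k a_k^q)^{1/q} · (∑_{k=1}^n p_k b_k^p)^{1/p} ≤ (pA/a)^{1/p} · (qB/b)^{1/q} · ∑_{k=1}^n p_k a_k b_k. (Here both sums ∑ p_k a_k^q and ∑ p_k b_k^p are non-negative, so the real powers are well defined.) -/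
/-!
Put `C = q A^(q-1) / b`, where `b` is the lower bound of the `b_k`. The sequence
`C a_k b_k - a_k^q` is non-negative and non-increasing: by convexity of `t ↦ t^q` each decrement of
`a_k^q` is at most `q A^(q-1)` times the decrement of `a_k`, while the decrement of `a_k b_k` is at
least `b` times it. Abel summation against weights with non-negative partial sums `P_k` then gives
`∑ p_k a_k^q ≤ C ∑ p_k a_k b_k`, and symmetrically for `∑ p_k b_k^p`. After taking the powers
`1/q` and `1/p`, the relation `1/p + 1/q = 1` turns the constants into `(pA/a)^(1/p) (qB/b)^(1/q)`.
-/

open Finset Real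

theorem sum_mul_nonneg_of_antitone_of_partial_sums_nonneg {R : Type*} [CommRing R]
    [PartialOrder R] [IsOrderedRing R] {n : ℕ} {w x : ℕ → R}
    (hw : ∀ k < n, 0 ≤ ∑ i ∈ range (k + 1), w i)
    (hx : ∀ k, k + 1 < n → x (k + 1) ≤ x k) (hx0 : ∀ k < n, 0 ≤ x k) :
    0 ≤ ∑ k ∈ range n, w k * x k := by
  rcases Nat.eq_zero_or_pos n with rfl | hn
  · simp
  have hparts := sum_range_by_parts x w n
  simp only [smul_eq_mul] at hparts
  simp_rw [mul_comm (w _) (x _), hparts]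
  have hlast : 0 ≤ x (n - 1) * ∑ i ∈ range n, w i := by
    have := hw (n - 1) (by omega)
    rw [Nat.sub_add_cancel hn] at this
    exact mul_nonneg (hx0 _ (by omega)) this
  have hsteps : ∑ i ∈ range (n - 1), (x (i + 1) - x i) * ∑ j ∈ range (i + 1), w j ≤ 0 := by
    refine sum_nonpos fun i hi => ?_
    rw [mem_range] at hi
    exact mul_nonpos_of_nonpos_of_nonneg (sub_nonpos.2 (hx i (by omega))) (hw i (by omega))
  exact sub_nonneg.2 (hsteps.trans hlast)

theorem rpow_sub_rpow_le_mul_rpow_mul_sub {q x y : ℝ} (hq : 1 ≤ q) (hx : 0 < x) (hy : 0 ≤ y) :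
    x ^ q - y ^ q ≤ q * x ^ (q - 1) * (x - y) := by
  have hbern := one_add_mul_self_le_rpow_one_add (s := y / x - 1)
    (by linarith [div_nonneg hy hx.le]) hq
  rw [add_sub_cancel, div_rpow hy hx.le, le_div_iff₀ (rpow_pos_of_pos hx q)] at hbern
  have hxq : x ^ q = x ^ (q - 1) * x := by rw [← rpow_add_one hx.ne', sub_add_cancel]
  rw [hxq] at hbern ⊢
  have hexpand : (1 + q * (y / x - 1)) * (x ^ (q - 1) * x)
      = x ^ (q - 1) * x + q * x ^ (q - 1) * y - q * (x ^ (q - 1) * x) := by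
    field_simp
    ring
  linarith

theorem sum_mul_rpow_nonneg {n : ℕ} {w a : ℕ → ℝ} {q : ℝ} (hq : 0 ≤ q)
    (hw : ∀ k < n, 0 ≤ ∑ i ∈ range (k + 1), w i)
    (ha : ∀ k, k + 1 < n → a (k + 1) ≤ a k) (ha0 : ∀ k < n, 0 ≤ a k) :
    0 ≤ ∑ k ∈ range n, w k * a k ^ q :=
  sum_mul_nonneg_of_antitone_of_partial_sums_nonneg hw
    (fun k hk => rpow_le_rpow (ha0 _ hk) (ha k hk) hq) (fun k hk => rpow_nonneg (ha0 k hk) q)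

theorem sum_mul_rpow_le_mul_sum_mul_mul {n : ℕ} {w a b : ℕ → ℝ} {A bLow q : ℝ} (hq : 1 ≤ q)
    (hw : ∀ k < n, 0 ≤ ∑ i ∈ range (k + 1), w i)
    (ha : ∀ k, k + 1 < n → a (k + 1) ≤ a k) (hb : ∀ k, k + 1 < n → b (k + 1) ≤ b k)
    (ha0 : ∀ k < n, 0 < a k) (haA : ∀ k < n, a k ≤ A)
    (hbLow : 0 < bLow) (hbLow_le : ∀ k < n, bLow ≤ b k) :
    ∑ k ∈ range n, w k * a k ^ q ≤ q * A ^ (q - 1) / bLow * ∑ k ∈ range n, w k * (a k * b k) := by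
  set C := q * A ^ (q - 1) / bLow
  have hCb : C * bLow = q * A ^ (q - 1) := div_mul_cancel₀ _ hbLow.ne'
  rcases Nat.eq_zero_or_pos n with rfl | hn
  · simp
  have hC : 0 ≤ C := by
    have := (ha0 0 hn).trans_le (haA 0 hn)
    positivity
  have hdecr : ∀ k < n, ∀ y, 0 ≤ y → y ≤ a k → a k ^ q - y ^ q ≤ C * bLow * (a k - y) := by
    intro k hk y hy hya
    rw [hCb]
    calc a k ^ q - y ^ q ≤ q * a k ^ (q - 1) * (a k - y) :=
          rpow_sub_rpow_le_mul_rpow_mul_sub hq (ha0 k hk) hy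
      _ ≤ q * A ^ (q - 1) * (a k - y) := by
          have := rpow_le_rpow (ha0 k hk).le (haA k hk) (sub_nonneg.2 hq)
          gcongr
  suffices 0 ≤ ∑ k ∈ range n, w k * (C * (a k * b k) - a k ^ q) by
    simp only [mul_sub, sum_sub_distrib, mul_left_comm _ C, ← mul_sum] at this
    linarith
  refine sum_mul_nonneg_of_antitone_of_partial_sums_nonneg hw (fun k hk => ?_) (fun k hk => ?_)
  · have hdrop := hdecr k (by omega) (a (k + 1)) (ha0 _ hk).le (ha k hk)
    have hprod : bLow * (a k - a (k + 1)) ≤ a k * b k - a (k + 1) * b (k + 1) := by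
      nlinarith [ha k hk, hb k hk, hbLow_le k (by omega), ha0 (k + 1) hk]
    nlinarith [mul_le_mul_of_nonneg_left hprod hC]
  · have hdrop := hdecr k hk 0 le_rfl (ha0 k hk).le
    rw [zero_rpow (by linarith), sub_zero, sub_zero] at hdrop
    nlinarith [mul_le_mul_of_nonneg_left (hbLow_le k hk) (mul_nonneg hC (ha0 k hk).le)]

theorem rpow_one_div_mul_rpow_one_div_le {X Y S C D p q : ℝ} (hp : 0 < p) (hq : 0 < q)
    (hpq : 1 / p + 1 / q = 1) (hX : 0 ≤ X) (hY : 0 ≤ Y) (hS : 0 ≤ S) (hC : 0 ≤ C) (hD : 0 ≤ D)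
    (hXS : X ≤ C * S) (hYS : Y ≤ D * S) :
    X ^ (1 / q) * Y ^ (1 / p) ≤ C ^ (1 / q) * D ^ (1 / p) * S :=
  calc X ^ (1 / q) * Y ^ (1 / p) ≤ (C * S) ^ (1 / q) * (D * S) ^ (1 / p) := by gcongr
    _ = C ^ (1 / q) * D ^ (1 / p) * S ^ (1 / q + 1 / p) := by
      rw [mul_rpow hC hS, mul_rpow hD hS, rpow_add' hS (by linarith)]
      ring
    _ = C ^ (1 / q) * D ^ (1 / p) * S := by rw [add_comm, hpq, rpow_one]

theorem tangent_slope_constants_rpow_eq {A B aLow bLow p q : ℝ} (hp : 0 < p) (hq : 0 < q)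
    (hpq : 1 / p + 1 / q = 1) (hA : 0 ≤ A) (hB : 0 ≤ B) (haLow : 0 ≤ aLow) (hbLow : 0 ≤ bLow) :
    (q * A ^ (q - 1) / bLow) ^ (1 / q) * (p * B ^ (p - 1) / aLow) ^ (1 / p) =
      (p * A / aLow) ^ (1 / p) * (q * B / bLow) ^ (1 / q) := by
  have hqp : (q - 1) * (1 / q) = 1 / p := by field_simp at hpq ⊢; linarith
  have hpq' : (p - 1) * (1 / p) = 1 / q := by field_simp at hpq ⊢; linarith
  simp only [div_rpow (mul_nonneg _ _) _, mul_rpow, ← rpow_mul, hqp, hpq', hp.le, hq.le, hA, hB,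
    haLow, hbLow, rpow_nonneg]
  ring

theorem stmt_2 (n : ℕ) (hn : 0 < n) (w a b : ℕ → ℝ) (A B : ℝ) (aLow bLow : ℝ) (p q : ℝ)
    (hp : 1 < p) (hq : 1 < q) (hpq : 1 / p + 1 / q = 1)
    (hP : ∀ k < n, 0 ≤ ∑ i ∈ Finset.range (k + 1), w i)
    (ha : ∀ i j, i ≤ j → j < n → a j ≤ a i)
    (hb : ∀ i j, i ≤ j → j < n → b j ≤ b i)
    (haLow : 0 < aLow) (hbLow : 0 < bLow)
    (haBound : ∀ k < n, aLow ≤ a k ∧ a k ≤ A)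
    (hbBound : ∀ k < n, bLow ≤ b k ∧ b k ≤ B) :
    (∑ k ∈ Finset.range n, w k * a k ^ q) ^ (1 / q) *
      (∑ k ∈ Finset.range n, w k * b k ^ p) ^ (1 / p) ≤
    (p * A / aLow) ^ (1 / p) * (q * B / bLow) ^ (1 / q) *
      ∑ k ∈ Finset.range n, w k * (a k * b k) := by
  have ha_step : ∀ k, k + 1 < n → a (k + 1) ≤ a k := fun k hk => ha k (k + 1) k.le_succ hk
  have hb_step : ∀ k, k + 1 < n → b (k + 1) ≤ b k := fun k hk => hb k (k + 1) k.le_succ hk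
  have ha0 : ∀ k < n, 0 < a k := fun k hk => haLow.trans_le (haBound k hk).1
  have hb0 : ∀ k < n, 0 < b k := fun k hk => hbLow.trans_le (hbBound k hk).1
  have hA : 0 < A := (ha0 0 hn).trans_le (haBound 0 hn).2
  have hB : 0 < B := (hb0 0 hn).trans_le (hbBound 0 hn).2
  have hX := sum_mul_rpow_le_mul_sum_mul_mul hq.le hP ha_step hb_step ha0
    (fun k hk => (haBound k hk).2) hbLow (fun k hk => (hbBound k hk).1)
  have hY := sum_mul_rpow_le_mul_sum_mul_mul hp.le hP hb_step ha_step hb0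
    (fun k hk => (hbBound k hk).2) haLow (fun k hk => (haBound k hk).1)
  simp only [mul_comm (b _) (a _)] at hY
  have hX0 := sum_mul_rpow_nonneg (zero_lt_one.trans hq).le hP ha_step fun k hk => (ha0 k hk).le
  have hY0 := sum_mul_rpow_nonneg (zero_lt_one.trans hp).le hP hb_step fun k hk => (hb0 k hk).le
  have hC : 0 < q * A ^ (q - 1) / bLow := by positivity
  have hS := nonneg_of_mul_nonneg_right (hX0.trans hX) hC
  rw [← tangent_slope_constants_rpow_eq (by linarith) (by linarith) hpq hA.le hB.le haLow.le
    hbLow.le]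
  exact rpow_one_div_mul_rpow_one_div_le (by linarith) (by linarith) hpq hX0 hY0 hS hC.le
    (by positivity) hX hY
end

section
/- For all real numbers a, A, b, B with 0 < a ≤ A and 0 < b < B, and all p, q > 1 with 1/p + 1/q = 1, there exist a positive integer n, real weights p_1,…,p_n with P_k ≥ 0 for all k = 1,…,n, and non-increasing sequences (a_k)_{k=1}^n and (b_k)_{k=1}^n with a ≤ a_k ≤ A and b ≤ b_k ≤ B for all k, such that ∑_{k=1}^n p_k a_k^q = 0 while ∑_{k=1}^n p_k a_k b_k > 0. (Hence no positive constant depending only on a, A, b, B, p, q can bound the Hölder-type ratio (∑ p_k a_k^q)^{1/q}(∑ p_k b_k^p)^{1/p} / ∑ p_k a_k b_k from below.) -/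
/-! Two terms suffice: weights `1, -1` (partial sums `1, 0`), the constant sequence `aLow`, and
`b` dropping from `B` to `bLow`. The terms `w k * a k ^ q` cancel, while
`∑ w k * a k * b k = aLow * (B - bLow) > 0`. -/

open Finset Real

theorem stmt_3_general (aLow A bLow B q : ℝ)
    (haA : 0 < aLow) (haA' : aLow ≤ A) (hbB' : bLow < B) :
    ∃ (n : ℕ) (_ : 0 < n) (w a b : ℕ → ℝ),
      (∀ k < n, 0 ≤ ∑ i ∈ Finset.range (k + 1), w i) ∧
      (∀ i j, i ≤ j → j < n → a j ≤ a i) ∧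
      (∀ i j, i ≤ j → j < n → b j ≤ b i) ∧
      (∀ k < n, aLow ≤ a k ∧ a k ≤ A) ∧
      (∀ k < n, bLow ≤ b k ∧ b k ≤ B) ∧
      (∑ k ∈ Finset.range n, w k * a k ^ q) = 0 ∧
      0 < ∑ k ∈ Finset.range n, w k * (a k * b k) := by
  refine ⟨2, two_pos, fun k => if k = 0 then 1 else -1, fun _ => aLow,
    fun k => if k = 0 then B else bLow, ?partialSums, fun _ _ _ _ => le_rfl, ?bAntitone,
    fun _ _ => ⟨le_rfl, haA'⟩, ?bBounds, by simp [sum_range_succ], ?positive⟩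
  case partialSums =>
    intro k hk
    interval_cases k <;> simp [sum_range_succ]
  case bAntitone =>
    intro i j hij _
    dsimp only
    rcases Nat.eq_zero_or_pos i with rfl | hi
    · rw [if_pos rfl]; split_ifs <;> linarith
    · simp [hi.ne', (hi.trans_le hij).ne']
  case bBounds =>
    intro k _
    dsimp only
    split_ifs
    · exact ⟨hbB'.le, le_rfl⟩
    · exact ⟨le_rfl, hbB'.le⟩
  case positive =>
    have : 0 < aLow * (B - bLow) := mul_pos haA (sub_pos.mpr hbB')
    simpa [sum_range_succ, mul_sub] using this

theorem stmt_3 (aLow A bLow B p q : ℝ)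
    (haA : 0 < aLow) (haA' : aLow ≤ A) (hbB : 0 < bLow) (hbB' : bLow < B)
    (hp : 1 < p) (hq : 1 < q) (hpq : 1 / p + 1 / q = 1) :
    ∃ (n : ℕ) (_ : 0 < n) (w a b : ℕ → ℝ),
      (∀ k < n, 0 ≤ ∑ i ∈ Finset.range (k + 1), w i) ∧
      (∀ i j, i ≤ j → j < n → a j ≤ a i) ∧
      (∀ i j, i ≤ j → j < n → b j ≤ b i) ∧
      (∀ k < n, aLow ≤ a k ∧ a k ≤ A) ∧
      (∀ k < n, bLow ≤ b k ∧ b k ≤ B) ∧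
      (∑ k ∈ Finset.range n, w k * a k ^ q) = 0 ∧
      0 < ∑ k ∈ Finset.range n, w k * (a k * b k) :=
  stmt_3_general aLow A bLow B q haA haA' hbB'
end

section
/- Let n be a positive integer, let p_1,…,p_n be real weights such that P_k ≥ 0 for all k = 1,…,n, and let (a_k)_{k=1}^n and (b_k)_{k=1}^n be non-increasing sequences of positive real numbers such that the sequence (a_k/b_k)_{k=1}^n is monotone (either non-increasing or non-decreasing) and 0 < m ≤ a_k/b_k ≤ M < ∞ for all k. Then (∑_{k=1}^n p_k a_k^2) · (∑_{k=1}^n p_k b_k^2) ≤ (1/4) · (m/M + M/m)^2 · (∑_{k=1}^n p_k a_k b_k)^2. -/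
/-!
With `C = m/M + M/m` and `t = C/(2M)`, the quadratic `φ r = t (2 M r - r²) - 1/t` is
non-decreasing on `(-∞, M]` and non-negative at `m`. Hence, when `a/b` is non-increasing,
`c_k = b_k² φ(a_k/b_k) = C a_k b_k - t a_k² - b_k²/t` is non-negative and non-increasing, and
Abel summation against weights with non-negative partial sums gives `∑ p_k c_k ≥ 0`, that is
`t A + B/t ≤ C S` for the three sums `A`, `B`, `S` of the inequality. AM-GM turns this into
`4 A B ≤ (C S)²`. A non-decreasing ratio `a/b` is reduced to this case by exchanging `a` and `b`,
which replaces `[m, M]` by `[1/M, 1/m]` and leaves `C` unchanged.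
-/

open Finset

lemma AntitoneOn.mul_of_nonneg {α M₀ : Type*} [Mul M₀] [Zero M₀] [Preorder M₀]
    [Preorder α] [PosMulMono M₀] [MulPosMono M₀] {f g : α → M₀} {s : Set α}
    (hf : AntitoneOn f s) (hg : AntitoneOn g s) (hf₀ : ∀ x ∈ s, 0 ≤ f x)
    (hg₀ : ∀ x ∈ s, 0 ≤ g x) : AntitoneOn (f * g) s :=
  fun _ ha _ hb h ↦ mul_le_mul (hf ha hb h) (hg ha hb h) (hg₀ _ hb) (hf₀ _ ha)

lemma AntitoneOn.pow_of_nonneg {α R : Type*} [Semiring R] [PartialOrder R] [IsOrderedRing R]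
    [Preorder α] {f : α → R} {s : Set α} (hf : AntitoneOn f s) (hf₀ : ∀ x ∈ s, 0 ≤ f x)
    (k : ℕ) : AntitoneOn (fun x => f x ^ k) s :=
  fun _ ha _ hb h ↦ pow_le_pow_left₀ (hf₀ _ hb) (hf ha hb h) k

theorem sum_mul_nonneg_of_antitoneOn {R : Type*} [CommRing R] [LinearOrder R]
    [IsStrictOrderedRing R] {n : ℕ} {p c : ℕ → R}
    (hP : ∀ k < n, 0 ≤ ∑ i ∈ range (k + 1), p i)
    (hc : AntitoneOn c (Set.Iio n)) (hc₀ : ∀ k < n, 0 ≤ c k) :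
    0 ≤ ∑ k ∈ range n, p k * c k := by
  rcases Nat.eq_zero_or_pos n with rfl | hn
  · simp
  have hparts := sum_range_by_parts (n := n) c p
  simp only [smul_eq_mul] at hparts
  rw [sum_congr rfl fun k _ => mul_comm (p k) (c k), hparts]
  refine sub_nonneg_of_le ((sum_nonpos fun i hi => ?_).trans ?_)
  · have hi : i + 1 < n := by rw [mem_range] at hi; omega
    exact mul_nonpos_of_nonpos_of_nonneg
      (sub_nonpos_of_le (hc (show i < n by omega) hi (Nat.le_succ i))) (hP i (by omega))
  · have hPn := hP (n - 1) (by omega)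
    rw [Nat.sub_add_cancel hn] at hPn
    exact mul_nonneg (hc₀ _ (by omega)) hPn

theorem monotoneOn_Iic_quadratic {t : ℝ} (M : ℝ) (ht : 0 ≤ t) :
    MonotoneOn (fun r => t * (2 * M * r - r ^ 2) - t⁻¹) (Set.Iic M) := by
  intro r hr r' hr' hrr'
  have hprod : 0 ≤ t * ((r' - r) * (2 * M - r - r')) :=
    mul_nonneg ht (mul_nonneg (sub_nonneg.2 hrr')
      (by linarith [Set.mem_Iic.1 hr, Set.mem_Iic.1 hr']))
  linear_combination hprod

theorem quadratic_nonneg_at_lower_bound {m M : ℝ} (hm : 0 < m) (hmM : m ≤ M) :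
    0 ≤ (m / M + M / m) / (2 * M) * (2 * M * m - m ^ 2) - ((m / M + M / m) / (2 * M))⁻¹ := by
  have hM : 0 < M := hm.trans_le hmM
  rw [sub_nonneg]
  field_simp
  have hfactor : 0 ≤ (M - m) ^ 3 * (m ^ 2 + m * M + 2 * M ^ 2) := by
    have := sub_nonneg.2 hmM
    positivity
  linear_combination hfactor

theorem four_mul_le_sq_of_add_le {x y z : ℝ} (h₀ : 0 ≤ x + y) (h : x + y ≤ z) :
    4 * x * y ≤ z ^ 2 :=
  (four_mul_le_sq_add x y).trans (pow_le_pow_left₀ h₀ h 2)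

theorem sum_mul_sq_mul_sum_mul_sq_le_of_antitoneOn_div {n : ℕ} {p a b : ℕ → ℝ} {m M : ℝ}
    (hP : ∀ k < n, 0 ≤ ∑ i ∈ range (k + 1), p i)
    (ha₀ : ∀ k < n, 0 < a k) (hb₀ : ∀ k < n, 0 < b k)
    (ha : AntitoneOn a (Set.Iio n)) (hb : AntitoneOn b (Set.Iio n))
    (hab : AntitoneOn (fun k => a k / b k) (Set.Iio n))
    (hm : 0 < m) (hmM : m ≤ M) (hr : ∀ k < n, a k / b k ∈ Set.Icc m M) :
    (∑ k ∈ range n, p k * a k ^ 2) * (∑ k ∈ range n, p k * b k ^ 2) ≤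
      1 / 4 * (m / M + M / m) ^ 2 * (∑ k ∈ range n, p k * (a k * b k)) ^ 2 := by
  set C := m / M + M / m
  -- `t` puts the vertex of `φ` at `M` and makes `b² φ (a / b) = C a b - t a² - b² / t`.
  set t := C / (2 * M)
  set φ : ℝ → ℝ := fun r => t * (2 * M * r - r ^ 2) - t⁻¹
  have hM : 0 < M := hm.trans_le hmM
  have ht : 0 < t := by positivity
  have hsq {f : ℕ → ℝ} (hf : AntitoneOn f (Set.Iio n)) (hf₀ : ∀ k < n, 0 < f k) :
      0 ≤ ∑ k ∈ range n, p k * f k ^ 2 :=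
    sum_mul_nonneg_of_antitoneOn hP (hf.pow_of_nonneg (fun k hk => (hf₀ k hk).le) 2)
      fun k hk => sq_nonneg (f k)
  have hφ₀ : ∀ k < n, 0 ≤ φ (a k / b k) := fun k hk =>
    (quadratic_nonneg_at_lower_bound hm hmM).trans
      (monotoneOn_Iic_quadratic M ht.le (Set.mem_Iic.2 hmM) (hr k hk).2 (hr k hk).1)
  have hφ : AntitoneOn (fun k => φ (a k / b k)) (Set.Iio n) := fun i hi j hj hij =>
    monotoneOn_Iic_quadratic M ht.le (hr j hj).2 (hr i hi).2 (hab hi hj hij)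
  have hlin : 0 ≤ ∑ k ∈ range n, p k * (b k ^ 2 * φ (a k / b k)) :=
    sum_mul_nonneg_of_antitoneOn hP
      ((hb.pow_of_nonneg (fun k hk => (hb₀ k hk).le) 2).mul_of_nonneg hφ
        (fun k _ => sq_nonneg (b k)) hφ₀)
      fun k hk => mul_nonneg (sq_nonneg (b k)) (hφ₀ k hk)
  have hexpand : ∑ k ∈ range n, p k * (b k ^ 2 * φ (a k / b k)) =
      C * ∑ k ∈ range n, p k * (a k * b k) - t * ∑ k ∈ range n, p k * a k ^ 2
        - t⁻¹ * ∑ k ∈ range n, p k * b k ^ 2 := by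
    simp only [mul_sum, ← sum_sub_distrib]
    refine sum_congr rfl fun k hk => ?_
    have hbk := (hb₀ k (mem_range.1 hk)).ne'
    simp only [φ, t]
    field_simp
  have hamgm := four_mul_le_sq_of_add_le (z := C * ∑ k ∈ range n, p k * (a k * b k))
    (add_nonneg (mul_nonneg ht.le (hsq ha ha₀)) (mul_nonneg (inv_nonneg.2 ht.le) (hsq hb hb₀)))
    (by linarith)
  have hinv : t * t⁻¹ = 1 := mul_inv_cancel₀ ht.ne'
  linear_combination (1 / 4) * hamgm
    - (∑ k ∈ range n, p k * a k ^ 2) * (∑ k ∈ range n, p k * b k ^ 2) * hinv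

theorem sum_mul_sq_mul_sum_mul_sq_le_of_monotoneOn_div {n : ℕ} {p a b : ℕ → ℝ} {m M : ℝ}
    (hP : ∀ k < n, 0 ≤ ∑ i ∈ range (k + 1), p i)
    (ha₀ : ∀ k < n, 0 < a k) (hb₀ : ∀ k < n, 0 < b k)
    (ha : AntitoneOn a (Set.Iio n)) (hb : AntitoneOn b (Set.Iio n))
    (hab : MonotoneOn (fun k => a k / b k) (Set.Iio n))
    (hm : 0 < m) (hmM : m ≤ M) (hr : ∀ k < n, a k / b k ∈ Set.Icc m M) :
    (∑ k ∈ range n, p k * a k ^ 2) * (∑ k ∈ range n, p k * b k ^ 2) ≤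
      1 / 4 * (m / M + M / m) ^ 2 * (∑ k ∈ range n, p k * (a k * b k)) ^ 2 := by
  have hinv : ∀ k < n, b k / a k = (a k / b k)⁻¹ := fun k _ => (inv_div _ _).symm
  have hpos : ∀ k < n, 0 < a k / b k := fun k hk => div_pos (ha₀ k hk) (hb₀ k hk)
  have hswap := sum_mul_sq_mul_sum_mul_sq_le_of_antitoneOn_div (a := b) (b := a)
    (m := M⁻¹) (M := m⁻¹) hP hb₀ ha₀ hb ha
    (fun i hi j hj hij => by
      simp only [hinv i hi, hinv j hj]
      exact inv_anti₀ (hpos i hi) (hab hi hj hij))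
    (inv_pos.2 (hm.trans_le hmM)) (inv_anti₀ hm hmM)
    (fun k hk => by
      rw [hinv k hk]
      exact ⟨inv_anti₀ (hpos k hk) (hr k hk).2, inv_anti₀ hm (hr k hk).1⟩)
  rw [inv_div_inv, inv_div_inv, mul_comm] at hswap
  simpa only [mul_comm (b _) (a _)] using hswap

theorem stmt_4 (n : ℕ) (hn : 0 < n) (p a b : ℕ → ℝ) (m M : ℝ)
    (hP : ∀ k < n, 0 ≤ ∑ i ∈ Finset.range (k + 1), p i)
    (hapos : ∀ k < n, 0 < a k) (hbpos : ∀ k < n, 0 < b k)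
    (ha : ∀ i j, i ≤ j → j < n → a j ≤ a i)
    (hb : ∀ i j, i ≤ j → j < n → b j ≤ b i)
    (hmono : (∀ i j, i ≤ j → j < n → a j / b j ≤ a i / b i) ∨
             (∀ i j, i ≤ j → j < n → a i / b i ≤ a j / b j))
    (hm : 0 < m) (hbound : ∀ k < n, m ≤ a k / b k ∧ a k / b k ≤ M) :
    (∑ k ∈ Finset.range n, p k * a k ^ 2) * (∑ k ∈ Finset.range n, p k * b k ^ 2) ≤
      1 / 4 * (m / M + M / m) ^ 2 * (∑ k ∈ Finset.range n, p k * (a k * b k)) ^ 2 := by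
  have hmM : m ≤ M := (hbound 0 hn).1.trans (hbound 0 hn).2
  have antitoneOn_of {f : ℕ → ℝ} (hf : ∀ i j, i ≤ j → j < n → f j ≤ f i) :
      AntitoneOn f (Set.Iio n) := fun i _ j hj hij => hf i j hij hj
  rcases hmono with hab | hab
  · exact sum_mul_sq_mul_sum_mul_sq_le_of_antitoneOn_div hP hapos hbpos (antitoneOn_of ha)
      (antitoneOn_of hb) (antitoneOn_of hab) hm hmM hbound
  · exact sum_mul_sq_mul_sum_mul_sq_le_of_monotoneOn_div hP hapos hbpos (antitoneOn_of ha)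
      (antitoneOn_of hb) (fun i _ j hj hij => hab i j hij hj) hm hmM hbound
end

section
/- Let n be a positive integer, let p_1,…,p_n be real weights such that P_k ≥ 0 for all k = 1,…,n, let (a_k)_{k=1}^n and (b_k)_{k=1}^n be non-negative non-increasing sequences, and let p ≥ 1. Then (∑_{k=1}^n p_k a_k^p)^{1/p} + (∑_{k=1}^n p_k b_k^p)^{1/p} ≤ 2^{1 − 1/p} · (∑_{k=1}^n p_k (a_k + b_k)^p)^{1/p}. (Here the three sums are non-negative, so the real powers are well defined.) -/
open Finset Real

/-! By Abel summation, `∑ w k * c k ≥ 0` whenever all partial sums of `w` are non-negative and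
`c` is non-negative and non-increasing. Applied to `c = a ^ p` and `c = b ^ p` this makes the two
sums on the left non-negative, and applied to `c = (a + b) ^ p - a ^ p - b ^ p` (non-negative by
superadditivity, non-increasing by convexity of `x ↦ x ^ p`) it gives `X + Y ≤ Z` for the three
sums. Concavity of `x ↦ x ^ (1 / p)` then yields
`X ^ (1 / p) + Y ^ (1 / p) ≤ 2 ^ (1 - 1 / p) * (X + Y) ^ (1 / p) ≤ 2 ^ (1 - 1 / p) * Z ^ (1 / p)`. -/

theorem sum_mul_nonneg_of_partialSums_nonneg {n : ℕ} {w c : ℕ → ℝ}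
    (hw : ∀ k < n, 0 ≤ ∑ i ∈ range (k + 1), w i)
    (hc0 : ∀ k < n, 0 ≤ c k) (hc : ∀ i, i + 1 < n → c (i + 1) ≤ c i) :
    0 ≤ ∑ k ∈ range n, w k * c k := by
  rcases Nat.eq_zero_or_pos n with rfl | hn
  · simp
  have hlast : 0 ≤ c (n - 1) * ∑ i ∈ range n, w i := by
    have := hw (n - 1) (by omega)
    rw [Nat.sub_add_cancel hn] at this
    exact mul_nonneg (hc0 _ (by omega)) this
  have hsteps : ∑ i ∈ range (n - 1), (c (i + 1) - c i) * ∑ j ∈ range (i + 1), w j ≤ 0 := by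
    refine sum_nonpos fun i hi => ?_
    rw [mem_range] at hi
    exact mul_nonpos_of_nonpos_of_nonneg (by linarith [hc i (by omega)]) (hw i (by omega))
  have hparts := sum_range_by_parts c w n
  simp only [smul_eq_mul] at hparts
  simp_rw [mul_comm (w _)]
  linarith

theorem ConvexOn.map_add_sub_map_le_map_add_sub_map {s : Set ℝ} {f : ℝ → ℝ}
    (hf : ConvexOn ℝ s f) {x y t : ℝ} (hx : x ∈ s) (hyt : y + t ∈ s) (hxy : x ≤ y)
    (ht : 0 ≤ t) : f (x + t) - f x ≤ f (y + t) - f y := by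
  rcases hxy.eq_or_lt with rfl | hxy
  · rfl
  rcases ht.eq_or_lt with rfl | ht
  · simp
  have hd : 0 < y + t - x := by linarith
  set μ := (y - x) / (y + t - x)
  set ν := t / (y + t - x)
  have hμ : 0 ≤ μ := div_nonneg (by linarith) hd.le
  have hν : 0 ≤ ν := div_nonneg ht.le hd.le
  have hμν : μ + ν = 1 := by
    rw [← add_div, div_eq_one_iff_eq hd.ne']
    ring
  -- `x + t` and `y` are the convex combinations of `x` and `y + t` with swapped weights
  have hxt : μ * x + ν * (y + t) = x + t := by simp only [μ, ν]; field_simp; ring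
  have hy : ν * x + μ * (y + t) = y := by simp only [μ, ν]; field_simp; ring
  have h₁ := hf.2 hx hyt hμ hν hμν
  have h₂ := hf.2 hx hyt hν hμ (by linarith)
  simp only [smul_eq_mul, hxt, hy] at h₁ h₂
  linear_combination h₁ + h₂ + (f x + f (y + t)) * hμν

theorem ConvexOn.map_add_sub_map_sub_map_le {f : ℝ → ℝ} (hf : ConvexOn ℝ (Set.Ici 0) f)
    {a a' b b' : ℝ} (ha' : 0 ≤ a') (haa' : a' ≤ a) (hb' : 0 ≤ b') (hbb' : b' ≤ b) :
    f (a' + b') - f a' - f b' ≤ f (a + b) - f a - f b := by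
  have hbase_a := hf.map_add_sub_map_le_map_add_sub_map (t := b') ha'
    (Set.mem_Ici.2 (by linarith)) haa' hb'
  have hbase_b := hf.map_add_sub_map_le_map_add_sub_map (t := a) hb'
    (Set.mem_Ici.2 (by linarith)) hbb' (by linarith)
  rw [add_comm b' a, add_comm b a] at hbase_b
  linarith

theorem Real.rpow_add_rpow_le_two_rpow_mul_rpow_add {q X Y : ℝ} (hq₀ : 0 ≤ q) (hq₁ : q ≤ 1)
    (hX : 0 ≤ X) (hY : 0 ≤ Y) : X ^ q + Y ^ q ≤ 2 ^ (1 - q) * (X + Y) ^ q := by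
  have hmid := (concaveOn_rpow hq₀ hq₁).2 (Set.mem_Ici.2 hX) (Set.mem_Ici.2 hY)
    (by norm_num : (0 : ℝ) ≤ 1 / 2) (by norm_num : (0 : ℝ) ≤ 1 / 2) (by norm_num)
  simp only [smul_eq_mul] at hmid
  have hhalf : 1 / 2 * X + 1 / 2 * Y = (X + Y) / 2 := by ring
  have h2q : (0 : ℝ) < 2 ^ q := by positivity
  rw [hhalf, div_rpow (by linarith) zero_le_two, le_div_iff₀ h2q] at hmid
  rw [rpow_sub zero_lt_two, rpow_one, div_mul_eq_mul_div, le_div_iff₀ h2q]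
  linarith

theorem stmt_6_general (n : ℕ) (w a b : ℕ → ℝ) (p : ℝ) (hp : 1 ≤ p)
    (hP : ∀ k < n, 0 ≤ ∑ i ∈ Finset.range (k + 1), w i)
    (ha0 : ∀ k < n, 0 ≤ a k) (hb0 : ∀ k < n, 0 ≤ b k)
    (ha : ∀ i j, i ≤ j → j < n → a j ≤ a i)
    (hb : ∀ i j, i ≤ j → j < n → b j ≤ b i) :
    (∑ k ∈ Finset.range n, w k * a k ^ p) ^ (1 / p) +
      (∑ k ∈ Finset.range n, w k * b k ^ p) ^ (1 / p) ≤
    2 ^ (1 - 1 / p) * (∑ k ∈ Finset.range n, w k * (a k + b k) ^ p) ^ (1 / p) := by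
  have hp₀ : 0 < p := by linarith
  have hX : 0 ≤ ∑ k ∈ range n, w k * a k ^ p :=
    sum_mul_nonneg_of_partialSums_nonneg hP (fun k hk => rpow_nonneg (ha0 k hk) p)
      fun i hi => rpow_le_rpow (ha0 _ hi) (ha i _ i.le_succ hi) hp₀.le
  have hY : 0 ≤ ∑ k ∈ range n, w k * b k ^ p :=
    sum_mul_nonneg_of_partialSums_nonneg hP (fun k hk => rpow_nonneg (hb0 k hk) p)
      fun i hi => rpow_le_rpow (hb0 _ hi) (hb i _ i.le_succ hi) hp₀.le
  have hXYZ : 0 ≤ ∑ k ∈ range n, w k * ((a k + b k) ^ p - a k ^ p - b k ^ p) :=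
    sum_mul_nonneg_of_partialSums_nonneg hP
      (fun k hk => by linarith [add_rpow_le_rpow_add (ha0 k hk) (hb0 k hk) hp])
      fun i hi => (convexOn_rpow hp).map_add_sub_map_sub_map_le (ha0 _ hi)
        (ha i _ i.le_succ hi) (hb0 _ hi) (hb i _ i.le_succ hi)
  simp only [mul_sub, sum_sub_distrib] at hXYZ
  calc _ ≤ 2 ^ (1 - 1 / p) * (∑ k ∈ range n, w k * a k ^ p + ∑ k ∈ range n, w k * b k ^ p)
          ^ (1 / p) :=
        rpow_add_rpow_le_two_rpow_mul_rpow_add (by positivity)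
          (div_le_one_of_le₀ hp hp₀.le) hX hY
    _ ≤ _ := by gcongr; linarith

theorem stmt_6 (n : ℕ) (hn : 0 < n) (w a b : ℕ → ℝ) (p : ℝ) (hp : 1 ≤ p)
    (hP : ∀ k < n, 0 ≤ ∑ i ∈ Finset.range (k + 1), w i)
    (ha0 : ∀ k < n, 0 ≤ a k) (hb0 : ∀ k < n, 0 ≤ b k)
    (ha : ∀ i j, i ≤ j → j < n → a j ≤ a i)
    (hb : ∀ i j, i ≤ j → j < n → b j ≤ b i) :
    (∑ k ∈ Finset.range n, w k * a k ^ p) ^ (1 / p) +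
      (∑ k ∈ Finset.range n, w k * b k ^ p) ^ (1 / p) ≤
    2 ^ (1 - 1 / p) * (∑ k ∈ Finset.range n, w k * (a k + b k) ^ p) ^ (1 / p) :=
  stmt_6_general n w a b p hp hP ha0 hb0 ha hb
end

section
/- Let n be a positive integer, let p_1,…,p_n be real weights such that P_k ≥ 0 for all k = 1,…,n, let (a_k)_{k=1}^n and (b_k)_{k=1}^n be non-negative non-increasing sequences, and let p ≥ 1. Then ∑_{k=1}^n p_k (a_k^p + b_k^p) ≤ ∑_{k=1}^n p_k (a_k + b_k)^p. -/
/-!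
The gap `c_k = (a_k + b_k)^p - a_k^p - b_k^p` is non-negative and, because `x ↦ x^p` is convex and
so has non-decreasing increments, non-increasing in `k`. Abel summation against weights with
non-negative partial sums then gives `∑ p_k c_k ≥ 0`, which is the inequality.
-/

open Finset Real

section Convex

variable {𝕜 : Type*} [Field 𝕜] [LinearOrder 𝕜] [IsStrictOrderedRing 𝕜]
  {s : Set 𝕜} {f : 𝕜 → 𝕜}

theorem ConvexOn.map_add_sub_map_le {x y d : 𝕜} (hf : ConvexOn 𝕜 s f) (hx : x ∈ s)
    (hy : y + d ∈ s) (hxy : x ≤ y) (hd : 0 ≤ d) :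
    f (x + d) - f x ≤ f (y + d) - f y := by
  rcases (show x ≤ y + d by linarith).eq_or_lt with hxyd | hxyd
  · obtain rfl : d = 0 := by linarith
    obtain rfl : x = y := by linarith
    rfl
  -- `x + d` and `y` are the two mirror-image convex combinations of `x` and `y + d`.
  have hL : 0 < y + d - x := by linarith
  set α := (y - x) / (y + d - x)
  set β := d / (y + d - x)
  have hα : 0 ≤ α := div_nonneg (sub_nonneg.2 hxy) hL.le
  have hβ : 0 ≤ β := div_nonneg hd hL.le
  have hαβ : α + β = 1 := by simp only [α, β]; field_simp; ring
  have h₁ := hf.2 hx hy hα hβ hαβ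
  have h₂ := hf.2 hx hy hβ hα (by rw [add_comm, hαβ])
  simp only [smul_eq_mul] at h₁ h₂
  rw [show α * x + β * (y + d) = x + d by simp only [α, β]; field_simp; ring] at h₁
  rw [show β * x + α * (y + d) = y by simp only [α, β]; field_simp; ring] at h₂
  linear_combination h₁ + h₂ + (f x + f (y + d)) * hαβ

theorem ConvexOn.map_add_sub_sub_le {x y x' y' : 𝕜} (hf : ConvexOn 𝕜 (Set.Ici 0) f)
    (hx : 0 ≤ x) (hxx' : x ≤ x') (hy : 0 ≤ y) (hyy' : y ≤ y') :
    f (x + y) - f x - f y ≤ f (x' + y') - f x' - f y' := by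
  have hx' : 0 ≤ x' := hx.trans hxx'
  have h₁ := hf.map_add_sub_map_le hx (Set.mem_Ici.2 (by linarith)) hxx' hy
  have h₂ := hf.map_add_sub_map_le hy (Set.mem_Ici.2 (by linarith)) hyy' hx'
  rw [add_comm y x', add_comm y' x'] at h₂
  linarith

end Convex

section Abel

variable {R : Type*} [CommRing R] [LinearOrder R] [IsStrictOrderedRing R]
  {n : ℕ} {w c : ℕ → R}

theorem mul_sum_range_le_sum_range_mul_of_antitoneOn
    (hw : ∀ k < n, 0 ≤ ∑ i ∈ range (k + 1), w i) (hc : AntitoneOn c (Set.Iio n)) :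
    ∀ m < n, c m * ∑ i ∈ range (m + 1), w i ≤ ∑ k ∈ range (m + 1), w k * c k := by
  intro m hm
  induction m with
  | zero => simp [mul_comm]
  | succ m ih =>
    have hcm : c (m + 1) ≤ c m := hc (Set.mem_Iio.2 (by omega)) (Set.mem_Iio.2 hm) m.le_succ
    have hwm := hw m (by omega)
    calc c (m + 1) * ∑ i ∈ range (m + 2), w i
        = c (m + 1) * ∑ i ∈ range (m + 1), w i + w (m + 1) * c (m + 1) := by
          rw [sum_range_succ _ (m + 1)]; ring
      _ ≤ c m * ∑ i ∈ range (m + 1), w i + w (m + 1) * c (m + 1) := by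
          gcongr
      _ ≤ ∑ k ∈ range (m + 2), w k * c k := by
          rw [sum_range_succ _ (m + 1)]; gcongr; exact ih (by omega)

theorem sum_range_mul_nonneg_of_antitoneOn
    (hw : ∀ k < n, 0 ≤ ∑ i ∈ range (k + 1), w i) (hc0 : ∀ k < n, 0 ≤ c k)
    (hc : AntitoneOn c (Set.Iio n)) :
    0 ≤ ∑ k ∈ range n, w k * c k := by
  cases n with
  | zero => simp
  | succ m =>
    calc 0 ≤ c m * ∑ i ∈ range (m + 1), w i :=
          mul_nonneg (hc0 m m.lt_succ_self) (hw m m.lt_succ_self)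
      _ ≤ _ := mul_sum_range_le_sum_range_mul_of_antitoneOn hw hc m m.lt_succ_self

end Abel

theorem stmt_7_general (n : ℕ) (w a b : ℕ → ℝ) (p : ℝ) (hp : 1 ≤ p)
    (hP : ∀ k < n, 0 ≤ ∑ i ∈ Finset.range (k + 1), w i)
    (ha0 : ∀ k < n, 0 ≤ a k) (hb0 : ∀ k < n, 0 ≤ b k)
    (ha : ∀ i j, i ≤ j → j < n → a j ≤ a i)
    (hb : ∀ i j, i ≤ j → j < n → b j ≤ b i) :
    ∑ k ∈ Finset.range n, w k * (a k ^ p + b k ^ p) ≤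
      ∑ k ∈ Finset.range n, w k * (a k + b k) ^ p := by
  have hconv := convexOn_rpow hp
  have hgap : 0 ≤ ∑ k ∈ range n, w k * ((a k + b k) ^ p - a k ^ p - b k ^ p) := by
    refine sum_range_mul_nonneg_of_antitoneOn hP (fun k hk => ?_) fun i _ j hj hij => ?_
    · simpa [zero_rpow (by linarith : p ≠ 0)] using
        hconv.map_add_sub_sub_le le_rfl (ha0 k hk) le_rfl (hb0 k hk)
    · exact hconv.map_add_sub_sub_le (ha0 j hj) (ha i j hij hj) (hb0 j hj) (hb i j hij hj)
  have hdiff : ∑ k ∈ range n, w k * ((a k + b k) ^ p - a k ^ p - b k ^ p) =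
      ∑ k ∈ range n, w k * (a k + b k) ^ p - ∑ k ∈ range n, w k * (a k ^ p + b k ^ p) := by
    rw [← sum_sub_distrib]
    exact sum_congr rfl fun k _ => by ring
  linarith

theorem stmt_7 (n : ℕ) (hn : 0 < n) (w a b : ℕ → ℝ) (p : ℝ) (hp : 1 ≤ p)
    (hP : ∀ k < n, 0 ≤ ∑ i ∈ Finset.range (k + 1), w i)
    (ha0 : ∀ k < n, 0 ≤ a k) (hb0 : ∀ k < n, 0 ≤ b k)
    (ha : ∀ i j, i ≤ j → j < n → a j ≤ a i)
    (hb : ∀ i j, i ≤ j → j < n → b j ≤ b i) :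
    ∑ k ∈ Finset.range n, w k * (a k ^ p + b k ^ p) ≤
      ∑ k ∈ Finset.range n, w k * (a k + b k) ^ p :=
  stmt_7_general n w a b p hp hP ha0 hb0 ha hb
end

section
/- Let p ≥ 1. For every ε > 0 there exist a positive integer n and non-negative non-increasing sequences (a_k)_{k=1}^n and (b_k)_{k=1}^n such that ∑_{k=1}^n (a_k + b_k)^p > 0 and (∑_{k=1}^n a_k^p)^{1/p} + (∑_{k=1}^n b_k^p)^{1/p} > (2^{1 − 1/p} − ε) · (∑_{k=1}^n (a_k + b_k)^p)^{1/p}. (Thus, with unit weights—which satisfy P_k ≥ 0 for all k—the constant 2^{1−1/p} in the Minkowski-type inequality is best possible.) -/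
/-!
The extremal pair is a spike `a = (1, 0, …, 0)` against a flat sequence `b = (δ, …, δ)` of
length `N` with `N δ ^ p = 1`. Both have `ℓ^p` norm `1`, while
`‖a + b‖_p ^ p = (1 + δ) ^ p + 1 - 1 / N → 2` as `N → ∞`. Hence
`(‖a‖_p + ‖b‖_p) / ‖a + b‖_p → 2 / 2 ^ (1 / p) = 2 ^ (1 - 1 / p)`.
-/

open Finset Real Filter Topology

lemma sum_range_ite_eq_zero {M : Type*} [AddCommMonoid M] {N : ℕ} (hN : 0 < N) (x y : M) :
    ∑ k ∈ range N, (if k = 0 then x else y) = x + (N - 1) • y := by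
  obtain ⟨n, rfl⟩ := Nat.exists_eq_add_one_of_ne_zero hN.ne'
  simp [sum_range_succ', add_comm]

lemma antitone_ite_eq_zero {α : Type*} [Preorder α] {x y : α} (h : y ≤ x) :
    Antitone fun k : ℕ => if k = 0 then x else y := by
  intro i j hij
  dsimp only
  split_ifs <;> first | exact le_rfl | exact h | omega

noncomputable def flatHeight (p : ℝ) (N : ℕ) : ℝ := ((N : ℝ)⁻¹) ^ p⁻¹

section

variable {p : ℝ} {N : ℕ}

lemma flatHeight_nonneg : 0 ≤ flatHeight p N := by
  unfold flatHeight; positivity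

lemma flatHeight_rpow (hp : p ≠ 0) : flatHeight p N ^ p = (N : ℝ)⁻¹ :=
  rpow_inv_rpow (by positivity) hp

lemma tendsto_flatHeight (hp : 0 < p) : Tendsto (flatHeight p) atTop (𝓝 0) := by
  have h := (tendsto_inv_atTop_nhds_zero_nat (𝕜 := ℝ)).rpow_const (Or.inr (inv_pos.2 hp).le)
  rwa [zero_rpow (inv_pos.2 hp).ne'] at h

lemma sum_spike_rpow (hp : p ≠ 0) (hN : 0 < N) :
    ∑ k ∈ range N, (if k = 0 then (1 : ℝ) else 0) ^ p = 1 := by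
  simp_rw [apply_ite (· ^ p), sum_range_ite_eq_zero hN, one_rpow, zero_rpow hp, smul_zero,
    add_zero]

lemma sum_flatHeight_rpow (hp : p ≠ 0) (hN : 0 < N) :
    ∑ _k ∈ range N, flatHeight p N ^ p = 1 := by
  rw [sum_const, card_range, nsmul_eq_mul, flatHeight_rpow hp]
  exact mul_inv_cancel₀ (by positivity)

lemma sum_spike_add_flatHeight_rpow (hp : p ≠ 0) (hN : 0 < N) :
    ∑ k ∈ range N, ((if k = 0 then (1 : ℝ) else 0) + flatHeight p N) ^ p =
      (1 + flatHeight p N) ^ p + (1 - (N : ℝ)⁻¹) := by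
  have hN' : (N : ℝ) ≠ 0 := by positivity
  simp_rw [ite_add, zero_add, apply_ite (· ^ p), sum_range_ite_eq_zero hN, nsmul_eq_mul,
    flatHeight_rpow hp, Nat.cast_sub (Nat.one_le_iff_ne_zero.2 hN.ne'), Nat.cast_one, sub_mul,
    mul_inv_cancel₀ hN', one_mul]

lemma tendsto_one_add_flatHeight_rpow_add (hp : 0 < p) :
    Tendsto (fun N : ℕ => (1 + flatHeight p N) ^ p + (1 - (N : ℝ)⁻¹)) atTop (𝓝 2) := by
  have h := (((tendsto_flatHeight hp).const_add 1).rpow_const (Or.inr hp.le)).add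
    ((tendsto_inv_atTop_nhds_zero_nat (𝕜 := ℝ)).const_sub 1)
  rwa [add_zero, one_rpow, sub_zero, one_add_one_eq_two] at h

end

theorem stmt_9 (p : ℝ) (hp : 1 ≤ p) :
    ∀ ε > (0 : ℝ), ∃ (n : ℕ) (_ : 0 < n) (a b : ℕ → ℝ),
      (∀ k < n, 0 ≤ a k) ∧ (∀ k < n, 0 ≤ b k) ∧
      (∀ i j, i ≤ j → j < n → a j ≤ a i) ∧
      (∀ i j, i ≤ j → j < n → b j ≤ b i) ∧
      0 < ∑ k ∈ Finset.range n, (a k + b k) ^ p ∧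
      (∑ k ∈ Finset.range n, a k ^ p) ^ (1 / p) +
        (∑ k ∈ Finset.range n, b k ^ p) ^ (1 / p) >
      (2 ^ (1 - 1 / p) - ε) * (∑ k ∈ Finset.range n, (a k + b k) ^ p) ^ (1 / p) := by
  intro ε hε
  have hp0 : 0 < p := by linarith
  have hlim := ((tendsto_one_add_flatHeight_rpow_add hp0).rpow_const
    (Or.inr (one_div_pos.2 hp0).le)).const_mul (2 ^ (1 - 1 / p) - ε)
  have hlt : (2 ^ (1 - 1 / p) - ε) * 2 ^ (1 / p) < 2 := by
    have h2 : (2 : ℝ) ^ (1 - 1 / p) * 2 ^ (1 / p) = 2 := by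
      rw [← rpow_add two_pos, sub_add_cancel, rpow_one]
    nlinarith [rpow_pos_of_pos (two_pos : (0 : ℝ) < 2) (1 / p)]
  obtain ⟨N, hN, hN0⟩ :=
    ((hlim.eventually (gt_mem_nhds hlt)).and (eventually_gt_atTop 0)).exists
  refine ⟨N, hN0, fun k => if k = 0 then 1 else 0, fun _ => flatHeight p N,
    fun k _ => by positivity, fun _ _ => flatHeight_nonneg,
    fun i j hij _ => antitone_ite_eq_zero zero_le_one hij, fun _ _ _ _ => le_rfl, ?_, ?_⟩
  · rw [sum_spike_add_flatHeight_rpow hp0.ne' hN0]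
    have hinv : (N : ℝ)⁻¹ ≤ 1 := inv_le_one_of_one_le₀ (by exact_mod_cast hN0)
    have hbase : 0 < 1 + flatHeight p N := by linarith [flatHeight_nonneg (p := p) (N := N)]
    exact add_pos_of_pos_of_nonneg (rpow_pos_of_pos hbase p) (sub_nonneg.2 hinv)
  · rw [sum_spike_rpow hp0.ne' hN0, sum_flatHeight_rpow hp0.ne' hN0,
      sum_spike_add_flatHeight_rpow hp0.ne' hN0, one_rpow]
    linarith
end

section
/- Let p > 1. For every ε > 0 there exist a positive integer n, real weights p_1,…,p_n with P_k ≥ 0 for all k = 1,…,n, and non-negative non-increasing sequences (a_k)_{k=1}^n and (b_k)_{k=1}^n such that ∑_{k=1}^n p_k (a_k + b_k)^p > 0 and (∑_{k=1}^n p_k a_k^p)^{1/p} + (∑_{k=1}^n p_k b_k^p)^{1/p} < ε · (∑_{k=1}^n p_k (a_k + b_k)^p)^{1/p}. (Hence no positive constant depending only on p bounds the Minkowski-type ratio from below.) -/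
/-! The weights `(W, 1 - W)` have non-negative partial sums `W, 1`, although the second one is
very negative. Take `a = (1, 1)` and `b = (t, 0)` with `W * t ^ p = 1`: then
`∑ w a^p = ∑ w b^p = 1`, whereas by Bernoulli's inequality
`∑ w (a + b)^p = 1 + W ((1 + t)^p - 1) ≥ 1 + p W t`, and `W t = t ^ (1 - p)` is unbounded
as `t → 0`. -/

open Finset Real

lemma exists_mul_rpow_eq_one_and_mul_eq {p : ℝ} (hp : 1 < p) {M : ℝ} (hM : 0 < M) :
    ∃ W t : ℝ, 0 < W ∧ 0 < t ∧ W * t ^ p = 1 ∧ W * t = M := by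
  set u := M ^ (1 / (p - 1))
  have hu : 0 < u := rpow_pos_of_pos hM _
  refine ⟨u ^ p, u⁻¹, rpow_pos_of_pos hu p, inv_pos.mpr hu, ?_, ?_⟩
  · rw [inv_rpow hu.le, mul_inv_cancel₀ (rpow_pos_of_pos hu p).ne']
  · rw [← rpow_neg_one, ← rpow_add hu, ← sub_eq_add_neg, ← rpow_mul hM.le,
      one_div_mul_cancel (sub_ne_zero.mpr hp.ne'), rpow_one]

lemma one_add_mul_mul_le_mul_one_add_rpow_add {p W t : ℝ} (hp : 1 ≤ p) (hW : 0 ≤ W)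
    (ht : 0 ≤ t) : 1 + p * (W * t) ≤ W * (1 + t) ^ p + (1 - W) := by
  have bernoulli : 1 + p * t ≤ (1 + t) ^ p :=
    one_add_mul_self_le_rpow_one_add (by linarith) hp
  nlinarith [mul_le_mul_of_nonneg_left bernoulli hW]

section TwoPoint

variable (W t : ℝ)

def twoPointWeight : ℕ → ℝ := fun k => if k = 0 then W else 1 - W

def spike : ℕ → ℝ := fun k => if k = 0 then t else 0

variable {W t}

lemma sum_range_two_twoPointWeight_mul (f : ℕ → ℝ) :
    ∑ k ∈ range 2, twoPointWeight W k * f k = W * f 0 + (1 - W) * f 1 := by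
  simp [sum_range_succ, twoPointWeight]

lemma sum_range_two_twoPointWeight : ∑ k ∈ range 2, twoPointWeight W k = 1 := by
  simp [sum_range_succ, twoPointWeight]

lemma sum_range_twoPointWeight_nonneg (hW : 0 ≤ W) {k : ℕ} (hk : k < 2) :
    0 ≤ ∑ i ∈ range (k + 1), twoPointWeight W i := by
  interval_cases k <;> simp [sum_range_succ, twoPointWeight, hW]

lemma spike_nonneg (ht : 0 ≤ t) (k : ℕ) : 0 ≤ spike t k := by
  unfold spike; split_ifs <;> simp [ht]

lemma antitone_spike (ht : 0 ≤ t) : Antitone (spike t) := by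
  intro i j hij
  unfold spike
  split_ifs <;> first | rfl | exact ht | omega

end TwoPoint

theorem stmt_11 (p : ℝ) (hp : 1 < p) :
    ∀ ε > (0 : ℝ), ∃ (n : ℕ) (_ : 0 < n) (w a b : ℕ → ℝ),
      (∀ k < n, 0 ≤ ∑ i ∈ Finset.range (k + 1), w i) ∧
      (∀ k < n, 0 ≤ a k) ∧ (∀ k < n, 0 ≤ b k) ∧
      (∀ i j, i ≤ j → j < n → a j ≤ a i) ∧
      (∀ i j, i ≤ j → j < n → b j ≤ b i) ∧
      0 < ∑ k ∈ Finset.range n, w k * (a k + b k) ^ p ∧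
      (∑ k ∈ Finset.range n, w k * a k ^ p) ^ (1 / p) +
        (∑ k ∈ Finset.range n, w k * b k ^ p) ^ (1 / p) <
      ε * (∑ k ∈ Finset.range n, w k * (a k + b k) ^ p) ^ (1 / p) := by
  intro ε hε
  have hp0 : 0 < p := one_pos.trans hp
  have hM : 0 < (2 / ε) ^ p := rpow_pos_of_pos (div_pos two_pos hε) p
  obtain ⟨W, t, hW, ht, hWt_p, hWt⟩ :=
    exists_mul_rpow_eq_one_and_mul_eq hp hM
  have hS : (2 / ε) ^ p < W * (1 + t) ^ p + (1 - W) := by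
    have bernoulli := one_add_mul_mul_le_mul_one_add_rpow_add hp.le hW.le ht.le
    rw [hWt] at bernoulli
    nlinarith
  refine ⟨2, two_pos, twoPointWeight W, fun _ => 1, spike t,
    fun k hk => sum_range_twoPointWeight_nonneg hW.le hk, fun _ _ => zero_le_one,
    fun k _ => spike_nonneg ht.le k, fun _ _ _ _ => le_rfl,
    fun _ _ hij _ => antitone_spike ht.le hij, ?_⟩
  simp only [sum_range_two_twoPointWeight, sum_range_two_twoPointWeight_mul, spike, if_true,
    one_ne_zero, if_false, add_zero, mul_one, mul_zero, one_rpow, zero_rpow hp0.ne', hWt_p]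
  refine ⟨hM.trans hS, ?_⟩
  calc (1 : ℝ) + 1
      = ε * ((2 / ε) ^ p) ^ (1 / p) := by
        rw [← rpow_mul (div_pos two_pos hε).le, mul_one_div_cancel hp0.ne', rpow_one]
        field_simp; norm_num
    _ < ε * (W * (1 + t) ^ p + (1 - W)) ^ (1 / p) :=
        mul_lt_mul_of_pos_left (rpow_lt_rpow (by positivity) hS (by positivity)) hε
end

section
/- Let m be a positive integer, let p ≥ 1, and let b_1 ≥ b_2 ≥ ⋯ ≥ b_{2m} > 0 be a positive non-increasing sequence. Then ∑_{k=1}^{2m} (−1)^{k+1} b_k^p ≥ p · b_{2m}^{p−1} · ∑_{k=1}^{2m} (−1)^{k+1} b_k. -/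
/-!
Group the alternating sum into consecutive pairs `b (2i) ^ p - b (2i+1) ^ p`. Since `t ↦ t ^ p`
is convex on `[0, ∞)` for `p ≥ 1`, each pair is at least the tangent estimate
`p * b (2i+1) ^ (p-1) * (b (2i) - b (2i+1))`, and `b (2i+1) ^ (p-1) ≥ b (2m-1) ^ (p-1)` because the
sequence is non-increasing and `p - 1 ≥ 0`.
-/

open Finset Real

theorem Finset.sum_range_two_mul_neg_one_pow_mul {R : Type*} [CommRing R] (g : ℕ → R) (n : ℕ) :
    ∑ k ∈ range (2 * n), (-1 : R) ^ k * g k = ∑ i ∈ range n, (g (2 * i) - g (2 * i + 1)) := by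
  induction n with
  | zero => simp
  | succ n ih =>
    rw [show 2 * (n + 1) = 2 * n + 1 + 1 by ring, sum_range_succ, sum_range_succ, ih,
      sum_range_succ, pow_succ, pow_mul]
    ring

theorem Real.mul_rpow_sub_one_mul_sub_le_rpow_sub_rpow {p x y : ℝ} (hp : 1 ≤ p) (hy : 0 ≤ y)
    (hyx : y ≤ x) : p * y ^ (p - 1) * (x - y) ≤ x ^ p - y ^ p := by
  rcases hyx.eq_or_lt with rfl | hlt
  · simp
  have htangent : p * y ^ (p - 1) ≤ slope (fun t : ℝ ↦ t ^ p) y x :=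
    (convexOn_rpow hp).le_slope_of_hasDerivAt hy (hy.trans hlt.le) hlt
      (hasDerivAt_rpow_const (Or.inr hp))
  rwa [slope_def_field, le_div_iff₀ (sub_pos.mpr hlt)] at htangent

theorem Real.mul_rpow_sub_one_mul_sub_le_rpow_sub_rpow_of_le {p c x y : ℝ} (hp : 1 ≤ p)
    (hc : 0 ≤ c) (hcy : c ≤ y) (hyx : y ≤ x) : p * c ^ (p - 1) * (x - y) ≤ x ^ p - y ^ p :=
  calc p * c ^ (p - 1) * (x - y) ≤ p * y ^ (p - 1) * (x - y) := by gcongr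
    _ ≤ x ^ p - y ^ p := mul_rpow_sub_one_mul_sub_le_rpow_sub_rpow hp (hc.trans hcy) hyx

theorem mul_rpow_sub_one_mul_alternating_sum_le {p c : ℝ} (hp : 1 ≤ p) (hc : 0 ≤ c) {b : ℕ → ℝ}
    {n : ℕ} (hcb : ∀ k < 2 * n, c ≤ b k) (hmono : ∀ i j, i ≤ j → j < 2 * n → b j ≤ b i) :
    p * c ^ (p - 1) * ∑ k ∈ range (2 * n), (-1 : ℝ) ^ k * b k ≤
      ∑ k ∈ range (2 * n), (-1 : ℝ) ^ k * b k ^ p := by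
  rw [sum_range_two_mul_neg_one_pow_mul, sum_range_two_mul_neg_one_pow_mul, mul_sum]
  refine sum_le_sum fun i hi ↦ ?_
  have hi : i < n := mem_range.mp hi
  exact mul_rpow_sub_one_mul_sub_le_rpow_sub_rpow_of_le hp hc (hcb _ (by omega))
    (hmono _ _ (by omega) (by omega))

theorem stmt_12 (m : ℕ) (hm : 0 < m) (p : ℝ) (hp : 1 ≤ p) (b : ℕ → ℝ)
    (hpos : ∀ k < 2 * m, 0 < b k)
    (hmono : ∀ i j, i ≤ j → j < 2 * m → b j ≤ b i) :
    ∑ k ∈ Finset.range (2 * m), (-1 : ℝ) ^ k * b k ^ p ≥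
      p * b (2 * m - 1) ^ (p - 1) * ∑ k ∈ Finset.range (2 * m), (-1 : ℝ) ^ k * b k := by
  have hlast : 2 * m - 1 < 2 * m := by omega
  exact mul_rpow_sub_one_mul_alternating_sum_le hp (hpos _ hlast).le
    (fun k hk ↦ hmono k _ (by omega) hlast) hmono
end

section
/- Let p > 1. For every C > 0 there exist a positive integer m and a positive non-increasing sequence b_1 ≥ b_2 ≥ ⋯ ≥ b_{2m} > 0 such that ∑_{k=1}^{2m} (−1)^{k+1} b_k > 0 and (∑_{k=1}^{2m} (−1)^{k+1} b_k^p)^{1/p} > C · ∑_{k=1}^{2m} (−1)^{k+1} b_k. (Hence, for the alternating weights p_k = (−1)^{k+1}, the constant in the reverse Hölder-type inequality necessarily tends to infinity as the lower bound of the sequence tends to 0.) -/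
open Finset Real Filter Topology

/- Already two terms suffice: for b = (1, 1 - ε) the alternating sum is ε, while the alternating
sum of p-th powers is 1 - (1 - ε)^p ≥ ε. Its p-th root is thus at least ε^(1/p), which beats C ε
for small ε because 1/p < 1. -/

lemma eventually_mul_lt_rpow_nhdsGT_zero {s : ℝ} (hs : s < 1) (C : ℝ) :
    ∀ᶠ x in 𝓝[>] (0 : ℝ), C * x < x ^ s := by
  have hblowup : Tendsto (fun x : ℝ => x ^ (s - 1)) (𝓝[>] 0) atTop :=
    tendsto_rpow_neg_nhdsGT_zero (by linarith)
  filter_upwards [hblowup.eventually_gt_atTop C, self_mem_nhdsWithin] with x hCx hx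
  calc C * x < x ^ (s - 1) * x := mul_lt_mul_of_pos_right hCx hx
    _ = x ^ s := by rw [← rpow_add_one hx.ne', sub_add_cancel]

lemma le_one_sub_one_sub_rpow {ε p : ℝ} (hε0 : 0 ≤ ε) (hε1 : ε ≤ 1) (hp : 1 ≤ p) :
    ε ≤ 1 - (1 - ε) ^ p := by
  have := rpow_le_self_of_le_one (sub_nonneg.mpr hε1) (by linarith) hp
  linarith

lemma sum_range_two_neg_one_pow_mul (f : ℕ → ℝ) :
    ∑ k ∈ range 2, (-1 : ℝ) ^ k * f k = f 0 - f 1 := by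
  simp [sum_range_succ, sub_eq_add_neg]

theorem stmt_13 (p : ℝ) (hp : 1 < p) :
    ∀ C > (0 : ℝ), ∃ (m : ℕ) (_ : 0 < m) (b : ℕ → ℝ),
      (∀ k < 2 * m, 0 < b k) ∧
      (∀ i j, i ≤ j → j < 2 * m → b j ≤ b i) ∧
      0 < ∑ k ∈ Finset.range (2 * m), (-1 : ℝ) ^ k * b k ∧
      (∑ k ∈ Finset.range (2 * m), (-1 : ℝ) ^ k * b k ^ p) ^ (1 / p) >
        C * ∑ k ∈ Finset.range (2 * m), (-1 : ℝ) ^ k * b k := by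
  intro C _
  have hp_inv : 1 / p < 1 := by rw [div_lt_one (by linarith)]; exact hp
  obtain ⟨ε, hCε, hε0, hε1⟩ :=
    ((eventually_mul_lt_rpow_nhdsGT_zero hp_inv C).and (Ioo_mem_nhdsGT one_pos)).exists
  set b : ℕ → ℝ := fun k => if k = 0 then 1 else 1 - ε
  have hsum : ∑ k ∈ range (2 * 1), (-1 : ℝ) ^ k * b k = ε := by
    rw [sum_range_two_neg_one_pow_mul]; simp [b]
  have hsum_pow : ∑ k ∈ range (2 * 1), (-1 : ℝ) ^ k * b k ^ p = 1 - (1 - ε) ^ p := by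
    rw [sum_range_two_neg_one_pow_mul (fun k => b k ^ p)]; simp [b]
  refine ⟨1, one_pos, b, ?_, ?_, ?_, ?_⟩
  · intro k _
    by_cases hk : k = 0 <;> simp [b, hk, hε1]
  · intro i j hij hj
    obtain rfl | rfl : j = 0 ∨ j = 1 := by omega
    · obtain rfl : i = 0 := by omega
      rfl
    · by_cases hi : i = 0 <;> simp [b, hi, hε0.le]
  · rwa [hsum]
  · rw [hsum, hsum_pow]
    calc C * ε < ε ^ (1 / p) := hCε
      _ ≤ (1 - (1 - ε) ^ p) ^ (1 / p) :=
        rpow_le_rpow hε0.le (le_one_sub_one_sub_rpow hε0.le hε1.le hp.le) (by positivity)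
end

section
/- Let α < β be real numbers, let w : ℝ → ℝ be integrable on [α, β], and set P(x) := ∫_α^x w(t) dt. Let f be a non-negative, non-increasing, differentiable function on [α, β], let g be a non-negative, non-decreasing, differentiable function on [α, β] with g(x) ≤ B for all x ∈ [α, β], and assume P(x) ≥ 0 for all x ∈ [α, β]. Assume f·g·w and f·w are integrable on [α, β]. Then ∫_α^β f(x) g(x) w(x) dx ≤ B · ∫_α^β f(x) w(x) dx. -/
/-!
With `h := f (B - g)`, which is non-increasing and non-negative, the claim says `∫ h w ≥ 0`.
Integrating by parts against the absolutely continuous primitive `P` of `w` gives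
`∫ h w = h β P β - ∫ h' P`, and both terms are non-negative because `h' ≤ 0 ≤ P`.
-/

open MeasureTheory intervalIntegral Set

theorem AbsolutelyContinuousOnInterval.congr {X : Type*} [PseudoMetricSpace X] {f g : ℝ → X}
    {a b : ℝ} (hf : AbsolutelyContinuousOnInterval f a b) (hfg : EqOn f g (uIcc a b)) :
    AbsolutelyContinuousOnInterval g a b := by
  refine hf.congr' ?_
  filter_upwards [Filter.mem_inf_of_right (Filter.mem_principal_self _)] with E hE
  refine Finset.sum_congr rfl fun i hi => ?_
  rw [hfg (hE.1 i hi).1, hfg (hE.1 i hi).2]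

theorem absolutelyContinuousOnInterval_of_differentiableAt {f : ℝ → ℝ} {a b : ℝ} (hab : a ≤ b)
    (hcont : ContinuousOn f (Icc a b)) (hdiff : ∀ x ∈ Ioo a b, DifferentiableAt ℝ f x)
    (hint : IntervalIntegrable (deriv f) volume a b) :
    AbsolutelyContinuousOnInterval f a b := by
  refine ((hint.absolutelyContinuousOnInterval_intervalIntegral left_mem_uIcc).add
    (LipschitzWith.const (f a)).lipschitzOnWith.absolutelyContinuousOnInterval).congr ?_
  intro x hx
  rw [uIcc_of_le hab] at hx
  have hsub : uIcc a x ⊆ Icc a b := by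
    rw [uIcc_of_le hx.1]
    exact Icc_subset_Icc le_rfl hx.2
  have hFTC : ∫ t in a..x, deriv f t = f x - f a := by
    refine integral_eq_sub_of_hasDeriv_right (hcont.mono hsub) (fun t ht => ?_)
      (hint.mono_set (uIcc_of_le hab ▸ hsub))
    rw [min_eq_left hx.1, max_eq_right hx.1] at ht
    exact (hdiff t ⟨ht.1, ht.2.trans_le hx.2⟩).hasDerivAt.hasDerivWithinAt
  simp [hFTC]

theorem AntitoneOn.deriv_nonpos_of_mem_interior {f : ℝ → ℝ} {s : Set ℝ} {x : ℝ}
    (hf : AntitoneOn f s) (hx : x ∈ interior s) : deriv f x ≤ 0 := by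
  rw [← derivWithin_of_mem_nhds (mem_interior_iff_mem_nhds.1 hx)]
  exact hf.derivWithin_nonpos

theorem AntitoneOn.intervalIntegrable_deriv {f : ℝ → ℝ} {a b : ℝ}
    (hf : AntitoneOn f (uIcc a b)) : IntervalIntegrable (deriv f) volume a b := by
  simpa [deriv.neg', Pi.neg_def] using hf.neg.intervalIntegrable_deriv.neg

theorem AntitoneOn.mul_integral_le_integral_mul {a b : ℝ} (hab : a ≤ b) {h w : ℝ → ℝ}
    (hh : AbsolutelyContinuousOnInterval h a b) (hanti : AntitoneOn h (Icc a b))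
    (hw : IntervalIntegrable w volume a b) (hP : ∀ x ∈ Icc a b, 0 ≤ ∫ t in a..x, w t) :
    h b * ∫ t in a..b, w t ≤ ∫ x in a..b, h x * w x := by
  set P : ℝ → ℝ := fun x => ∫ t in a..x, w t
  have hPac : AbsolutelyContinuousOnInterval P a b :=
    hw.absolutelyContinuousOnInterval_intervalIntegral left_mem_uIcc
  have hderivP : ∫ x in a..b, h x * deriv P x = ∫ x in a..b, h x * w x := by
    refine integral_congr_ae ?_
    filter_upwards [hw.ae_hasDerivAt_integral] with x hx hxab
    rw [(hx (uIoc_subset_uIcc hxab) a left_mem_uIcc).deriv]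
  have hparts : ∫ x in a..b, deriv h x * P x ≤ 0 := by
    rw [integral_of_le hab, integral_Ioc_eq_integral_Ioo]
    refine setIntegral_nonpos measurableSet_Ioo fun x hx => ?_
    exact mul_nonpos_of_nonpos_of_nonneg
      (hanti.deriv_nonpos_of_mem_interior (by rwa [interior_Icc]))
      (hP x (Ioo_subset_Icc_self hx))
  have hibp := hh.integral_mul_deriv_eq_deriv_mul hPac
  simp only [P, integral_same, mul_zero, sub_zero] at hibp hparts
  rw [← hderivP]
  linarith

theorem stmt_14_general (α β B : ℝ) (hab : α < β) (w f g : ℝ → ℝ)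
    (hw : IntervalIntegrable w volume α β)
    (hP : ∀ x ∈ Set.Icc α β, 0 ≤ ∫ t in α..x, w t)
    (hf0 : ∀ x ∈ Set.Icc α β, 0 ≤ f x)
    (hf : AntitoneOn f (Set.Icc α β))
    (hfdiff : DifferentiableOn ℝ f (Set.Icc α β))
    (hg : MonotoneOn g (Set.Icc α β))
    (hgdiff : DifferentiableOn ℝ g (Set.Icc α β))
    (hgB : ∀ x ∈ Set.Icc α β, g x ≤ B)
    (hfgw : IntervalIntegrable (fun x => f x * g x * w x) volume α β)
    (hfw : IntervalIntegrable (fun x => f x * w x) volume α β) :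
    (∫ x in α..β, f x * g x * w x) ≤ B * ∫ x in α..β, f x * w x := by
  set h : ℝ → ℝ := fun x => f x * (B - g x)
  have hdiff : DifferentiableOn ℝ h (Icc α β) := hfdiff.mul (hgdiff.const_sub B)
  have hanti : AntitoneOn h (Icc α β) := fun x hx y hy hxy =>
    mul_le_mul (hf hx hy hxy) (by linarith [hg hx hy hxy]) (by linarith [hgB y hy]) (hf0 x hx)
  have hac : AbsolutelyContinuousOnInterval h α β :=
    absolutelyContinuousOnInterval_of_differentiableAt hab.le hdiff.continuousOn
      (fun x hx => hdiff.differentiableAt (Icc_mem_nhds hx.1 hx.2))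
      ((uIcc_of_le hab.le).symm ▸ hanti).intervalIntegrable_deriv
  have hβ : β ∈ Icc α β := right_mem_Icc.2 hab.le
  have hlower := hanti.mul_integral_le_integral_mul hab.le hac hw hP
  have hhβ : 0 ≤ h β * ∫ t in α..β, w t :=
    mul_nonneg (mul_nonneg (hf0 β hβ) (by linarith [hgB β hβ])) (hP β hβ)
  have hsplit : ∫ x in α..β, h x * w x =
      B * (∫ x in α..β, f x * w x) - ∫ x in α..β, f x * g x * w x := by
    rw [← intervalIntegral.integral_const_mul, ← integral_sub (hfw.const_mul B) hfgw]
    congr 1 with x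
    ring
  linarith

theorem stmt_14 (α β B : ℝ) (hab : α < β) (w f g : ℝ → ℝ)
    (hw : IntervalIntegrable w volume α β)
    (hP : ∀ x ∈ Set.Icc α β, 0 ≤ ∫ t in α..x, w t)
    (hf0 : ∀ x ∈ Set.Icc α β, 0 ≤ f x)
    (hf : AntitoneOn f (Set.Icc α β))
    (hfdiff : DifferentiableOn ℝ f (Set.Icc α β))
    (hg0 : ∀ x ∈ Set.Icc α β, 0 ≤ g x)
    (hg : MonotoneOn g (Set.Icc α β))
    (hgdiff : DifferentiableOn ℝ g (Set.Icc α β))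
    (hgB : ∀ x ∈ Set.Icc α β, g x ≤ B)
    (hfgw : IntervalIntegrable (fun x => f x * g x * w x) volume α β)
    (hfw : IntervalIntegrable (fun x => f x * w x) volume α β) :
    (∫ x in α..β, f x * g x * w x) ≤ B * ∫ x in α..β, f x * w x :=
  stmt_14_general α β B hab w f g hw hP hf0 hf hfdiff hg hgdiff hgB hfgw hfw
end

section
/- Let α < β be real numbers, let w : ℝ → ℝ be integrable on [α, β], and set P(x) := ∫_α^x w(t) dt, with P(x) ≥ 0 for all x ∈ [α, β]. Let f and g be non-increasing differentiable functions on [α, β] with 0 < a ≤ f(x) ≤ A < ∞ and 0 < b ≤ g(x) ≤ B < ∞ for all x ∈ [α, β], and let p, q > 1 satisfy 1/p + 1/q = 1. Assume the functions f^q·w, g^p·w, and f·g·w are integrable on [α, β]. Then (∫_α^β f(x)^q w(x) dx)^{1/q} · (∫_α^β g(x)^p w(x) dx)^{1/p} ≤ (pA/a)^{1/p} · (qB/b)^{1/q} · ∫_α^β f(x) g(x) w(x) dx. (Here the integrals ∫ f^q w and ∫ g^p w are non-negative, so the real powers are well defined.) -/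
/-!
If all the partial integrals `P(x) = ∫_α^x w` are nonnegative, then `∫ h w ≥ 0` for every
nonnegative non-increasing `h` (a Steffensen-type inequality): by the layer-cake formula
`∫ h w = ∫_0^∞ (∫_{h > t} w) dt`, and each superlevel set `{h > t}` is, up to a null set, an
initial interval `(α, s]`, on which the integral of `w` is `P(s) ≥ 0`.

With `c = q A^(q-1) / b`, the function `c f g - f^q` is nonnegative and non-increasing, because
`x^q - y^q ≤ q A^(q-1) (x - y)` for `0 ≤ y ≤ x ≤ A` while `f g` decreases at least `b` times as
fast as `f`. Hence `∫ f^q w ≤ (q A^(q-1) / b) ∫ f g w`, symmetrically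
`∫ g^p w ≤ (p B^(p-1) / a) ∫ f g w`, and raising these to the powers `1/q` and `1/p`, whose sum
is `1`, gives the constant `(p A / a)^(1/p) (q B / b)^(1/q)`.
-/

open Real MeasureTheory intervalIntegral
open Set

theorem setIntegral_Ioi_indicator_Iio_const {c : ℝ} (hc : 0 ≤ c) (y : ℝ) :
    ∫ t in Ioi 0, (Iio c).indicator (fun _ => y) t = c * y := by
  rw [integral_indicator_const _ measurableSet_Iio, measureReal_restrict_apply measurableSet_Iio,
    Iio_inter_Ioi, Real.volume_real_Ioo_of_le hc, sub_zero, smul_eq_mul]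

theorem integral_mul_eq_integral_setIntegral_lt {X : Type*} [MeasurableSpace X] {μ : Measure X}
    [SFinite μ] {h w : X → ℝ} (hh : Measurable h) (h0 : ∀ x, 0 ≤ h x)
    (hw : AEStronglyMeasurable w μ) (hhw : Integrable (fun x => h x * w x) μ) :
    ∫ x, h x * w x ∂μ = ∫ t in Ioi 0, ∫ x in {x | t < h x}, w x ∂μ := by
  set F : X → ℝ → ℝ := fun x => (Iio (h x)).indicator fun _ => w x
  have hF : Function.uncurry F = {p : X × ℝ | p.2 < h p.1}.indicator fun p => w p.1 := by
    ext ⟨x, t⟩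
    by_cases ht : t < h x <;> simp [F, ht]
  have hint : Integrable (Function.uncurry F) (μ.prod (volume.restrict (Ioi 0))) := by
    have hmeas : AEStronglyMeasurable (Function.uncurry F) (μ.prod (volume.restrict (Ioi 0))) := by
      rw [hF]
      exact hw.comp_fst.indicator (measurableSet_lt measurable_snd (hh.comp measurable_fst))
    refine (integrable_prod_iff hmeas).2 ⟨.of_forall fun x => ?_, ?_⟩
    · change Integrable (F x) _
      rw [integrable_indicator_iff measurableSet_Iio]
      refine integrableOn_const ?_
      rw [Measure.restrict_apply measurableSet_Iio, Iio_inter_Ioi]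
      exact measure_Ioo_lt_top.ne
    · refine hhw.norm.congr (.of_forall fun x => ?_)
      simp only [Function.uncurry_apply_pair, F, norm_indicator_eq_indicator_norm,
        setIntegral_Ioi_indicator_Iio_const (h0 x), norm_mul, Real.norm_of_nonneg (h0 x)]
  calc ∫ x, h x * w x ∂μ = ∫ x, (∫ t in Ioi 0, F x t) ∂μ := by
        simp only [F, setIntegral_Ioi_indicator_Iio_const (h0 _)]
    _ = ∫ t in Ioi 0, (∫ x, F x t ∂μ) := integral_integral_swap hint
    _ = ∫ t in Ioi 0, ∫ x in {x | t < h x}, w x ∂μ := by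
        congr 1 with t
        rw [← MeasureTheory.integral_indicator (measurableSet_lt measurable_const hh)]
        rfl

theorem setIntegral_inter_Ioc_nonneg_of_isLowerSet {w : ℝ → ℝ} {α β : ℝ} {L : Set ℝ}
    (hL : IsLowerSet L) (hP : ∀ x ∈ Icc α β, 0 ≤ ∫ t in α..x, w t) :
    0 ≤ ∫ x in L ∩ Ioc α β, w x := by
  set T := L ∩ Ioc α β
  rcases T.eq_empty_or_nonempty with hT | hT
  · simp [hT]
  have hbdd : BddAbove T := ⟨β, fun x hx => hx.2.2⟩
  obtain ⟨x₀, hx₀⟩ := hT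
  set c := sSup T
  have hαc : α < c := hx₀.2.1.trans_le (le_csSup hbdd hx₀)
  have hcβ : c ≤ β := csSup_le ⟨x₀, hx₀⟩ fun x hx => hx.2.2
  have hIoo : Ioo α c ⊆ T := fun y hy => by
    obtain ⟨x, hxT, hyx⟩ := exists_lt_of_lt_csSup ⟨x₀, hx₀⟩ hy.2
    exact ⟨hL hyx.le hxT.1, hy.1, hyx.le.trans hxT.2.2⟩
  have hIoc : T ⊆ Ioc α c := fun x hx => ⟨hx.2.1, le_csSup hbdd hx⟩
  have hTc : T =ᵐ[volume] Ioc α c :=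
    (LE.le.eventuallyLE hIoc).antisymm (Ioo_ae_eq_Ioc.symm.le.trans (LE.le.eventuallyLE hIoo))
  rw [setIntegral_congr_set hTc, ← intervalIntegral.integral_of_le hαc.le]
  exact hP c ⟨hαc.le, hcβ⟩

theorem setIntegral_Ioc_mul_nonneg_of_antitone {w h : ℝ → ℝ} {α β : ℝ} (hh : Antitone h)
    (h0 : ∀ x, 0 ≤ h x) (hw : IntegrableOn w (Ioc α β))
    (hhw : IntegrableOn (fun x => h x * w x) (Ioc α β))
    (hP : ∀ x ∈ Icc α β, 0 ≤ ∫ t in α..x, w t) :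
    0 ≤ ∫ x in Ioc α β, h x * w x := by
  rw [integral_mul_eq_integral_setIntegral_lt hh.measurable h0 hw.aestronglyMeasurable hhw]
  refine setIntegral_nonneg measurableSet_Ioi fun t _ => ?_
  rw [Measure.restrict_restrict (measurableSet_lt measurable_const hh.measurable)]
  exact setIntegral_inter_Ioc_nonneg_of_isLowerSet (fun x y hyx hx => hx.trans_le (hh hyx)) hP

theorem intervalIntegral.integral_mul_nonneg_of_antitoneOn {w h : ℝ → ℝ} {α β : ℝ} (hαβ : α ≤ β)
    (hh : AntitoneOn h (Icc α β)) (h0 : ∀ x ∈ Icc α β, 0 ≤ h x)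
    (hw : IntervalIntegrable w volume α β) (hP : ∀ x ∈ Icc α β, 0 ≤ ∫ t in α..x, w t) :
    0 ≤ ∫ x in α..β, h x * w x := by
  set H : ℝ → ℝ := fun x => h (projIcc α β hαβ x)
  have hH : Antitone H := fun x y hxy =>
    hh (projIcc α β hαβ x).2 (projIcc α β hαβ y).2 (monotone_projIcc hαβ hxy)
  have hHbdd : ∀ x, ‖H x‖ ≤ h α := fun x => by
    rw [Real.norm_of_nonneg (h0 _ (projIcc α β hαβ x).2)]
    exact hh (left_mem_Icc.2 hαβ) (projIcc α β hαβ x).2 (projIcc α β hαβ x).2.1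
  have hHw : IntegrableOn (fun x => H x * w x) (Ioc α β) :=
    hw.1.bdd_mul hH.measurable.aestronglyMeasurable (.of_forall hHbdd)
  rw [intervalIntegral.integral_of_le hαβ, setIntegral_congr_fun (g := fun x => H x * w x)
    measurableSet_Ioc fun x hx => by simp [H, projIcc_of_mem hαβ (Ioc_subset_Icc_self hx)]]
  exact setIntegral_Ioc_mul_nonneg_of_antitone hH (fun x => h0 _ (projIcc α β hαβ x).2) hw.1 hHw hP

theorem Real.rpow_sub_rpow_le_mul_sub_mul {q A b x y u v : ℝ} (hq : 1 ≤ q) (hb : 0 < b)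
    (hy : 0 ≤ y) (hyx : y ≤ x) (hxA : x ≤ A) (hvu : v ≤ u) (hbu : b ≤ u) :
    x ^ q - y ^ q ≤ q * A ^ (q - 1) / b * (x * u - y * v) := by
  have hslope : x ^ q - y ^ q ≤ q * A ^ (q - 1) * (x - y) := by
    rcases hyx.eq_or_lt with rfl | hlt
    · simp
    have hconv := (convexOn_rpow hq).slope_le_deriv hy (hy.trans hlt.le) hlt
      (Real.differentiableAt_rpow_const_of_ne q (hy.trans_lt hlt).ne')
    rw [slope_def_field, (Real.hasDerivAt_rpow_const (Or.inr hq)).deriv,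
      div_le_iff₀ (sub_pos.2 hlt)] at hconv
    calc x ^ q - y ^ q ≤ q * x ^ (q - 1) * (x - y) := hconv
      _ ≤ q * A ^ (q - 1) * (x - y) := by
          gcongr
          linarith
  have hmul : b * (x - y) ≤ x * u - y * v := by nlinarith
  calc x ^ q - y ^ q ≤ q * A ^ (q - 1) * (x - y) := hslope
    _ = q * A ^ (q - 1) / b * (b * (x - y)) := by field_simp
    _ ≤ q * A ^ (q - 1) / b * (x * u - y * v) := by
        gcongr
        have hA : 0 ≤ A := hy.trans (hyx.trans hxA)
        exact div_nonneg (mul_nonneg (by linarith) (Real.rpow_nonneg hA _)) hb.le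

theorem intervalIntegral.integral_rpow_mul_le_of_antitoneOn {w f g : ℝ → ℝ} {α β A b q : ℝ}
    (hαβ : α ≤ β) (hq : 1 ≤ q) (hb : 0 < b) (hf : AntitoneOn f (Icc α β))
    (hg : AntitoneOn g (Icc α β)) (hf0 : ∀ x ∈ Icc α β, 0 ≤ f x)
    (hfA : ∀ x ∈ Icc α β, f x ≤ A) (hgb : ∀ x ∈ Icc α β, b ≤ g x)
    (hw : IntervalIntegrable w volume α β) (hP : ∀ x ∈ Icc α β, 0 ≤ ∫ t in α..x, w t)
    (hfqw : IntervalIntegrable (fun x => f x ^ q * w x) volume α β)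
    (hfgw : IntervalIntegrable (fun x => f x * g x * w x) volume α β) :
    ∫ x in α..β, f x ^ q * w x ≤ q * A ^ (q - 1) / b * ∫ x in α..β, f x * g x * w x := by
  set c := q * A ^ (q - 1) / b
  have hanti : AntitoneOn (fun x => c * (f x * g x) - f x ^ q) (Icc α β) :=
    fun x hx y hy hxy => by
      have := Real.rpow_sub_rpow_le_mul_sub_mul hq hb (hf0 y hy) (hf hx hy hxy) (hfA x hx)
        (hg hx hy hxy) (hgb x hx)
      dsimp only
      linarith
  have hnonneg : ∀ x ∈ Icc α β, 0 ≤ c * (f x * g x) - f x ^ q := fun x hx => by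
    have := Real.rpow_sub_rpow_le_mul_sub_mul hq hb le_rfl (hf0 x hx) (hfA x hx) le_rfl (hgb x hx)
    rw [Real.zero_rpow (by linarith), zero_mul, sub_zero, sub_zero] at this
    linarith
  have key := integral_mul_nonneg_of_antitoneOn hαβ hanti hnonneg hw hP
  simp only [sub_mul, mul_assoc c] at key
  rw [integral_sub (hfgw.const_mul c) hfqw, integral_const_mul] at key
  linarith

theorem Real.rpow_mul_rpow_le_of_le_mul {u v I c d r s : ℝ} (hu : 0 ≤ u) (hv : 0 ≤ v)
    (hI : 0 ≤ I) (hc : 0 ≤ c) (hd : 0 ≤ d) (hr : 0 ≤ r) (hs : 0 ≤ s) (hrs : r + s = 1)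
    (hucI : u ≤ c * I) (hvdI : v ≤ d * I) :
    u ^ r * v ^ s ≤ c ^ r * d ^ s * I := by
  calc u ^ r * v ^ s ≤ (c * I) ^ r * (d * I) ^ s := by gcongr
    _ = c ^ r * d ^ s * I ^ (r + s) := by
        rw [Real.mul_rpow hc hI, Real.mul_rpow hd hI, Real.rpow_add' hI (by simp [hrs])]
        ring
    _ = c ^ r * d ^ s * I := by rw [hrs, Real.rpow_one]

theorem Real.mul_rpow_sub_one_div_rpow_mul_eq {a A b B p q : ℝ} (ha : 0 ≤ a) (hA : 0 ≤ A)
    (hb : 0 ≤ b) (hB : 0 ≤ B) (hp : 0 < p) (hq : 0 < q) (hpq : 1 / p + 1 / q = 1) :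
    (q * A ^ (q - 1) / b) ^ (1 / q) * (p * B ^ (p - 1) / a) ^ (1 / p) =
      (p * A / a) ^ (1 / p) * (q * B / b) ^ (1 / q) := by
  have hqp : (q - 1) * (1 / q) = 1 / p := by field_simp at hpq ⊢; linarith
  have hpq' : (p - 1) * (1 / p) = 1 / q := by field_simp at hpq ⊢; linarith
  rw [Real.div_rpow (by positivity) hb, Real.div_rpow (by positivity) ha,
    Real.div_rpow (by positivity) ha, Real.div_rpow (by positivity) hb,
    Real.mul_rpow hq.le (by positivity), Real.mul_rpow hp.le (by positivity),
    Real.mul_rpow hp.le hA, Real.mul_rpow hq.le hB, ← Real.rpow_mul hA, ← Real.rpow_mul hB,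
    hqp, hpq']
  ring

theorem stmt_15_general (α β a A b B p q : ℝ) (hab : α < β) (w f g : ℝ → ℝ)
    (hw : IntervalIntegrable w volume α β)
    (hP : ∀ x ∈ Set.Icc α β, 0 ≤ ∫ t in α..x, w t)
    (hf : AntitoneOn f (Set.Icc α β))
    (hg : AntitoneOn g (Set.Icc α β))
    (ha : 0 < a) (hb : 0 < b)
    (hfab : ∀ x ∈ Set.Icc α β, a ≤ f x ∧ f x ≤ A)
    (hgab : ∀ x ∈ Set.Icc α β, b ≤ g x ∧ g x ≤ B)
    (hp : 1 < p) (hq : 1 < q) (hpq : 1 / p + 1 / q = 1)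
    (hfqw : IntervalIntegrable (fun x => f x ^ q * w x) volume α β)
    (hgpw : IntervalIntegrable (fun x => g x ^ p * w x) volume α β)
    (hfgw : IntervalIntegrable (fun x => f x * g x * w x) volume α β) :
    (∫ x in α..β, f x ^ q * w x) ^ (1 / q) * (∫ x in α..β, g x ^ p * w x) ^ (1 / p) ≤
      (p * A / a) ^ (1 / p) * (q * B / b) ^ (1 / q) * ∫ x in α..β, f x * g x * w x := by
  have hαβ := hab.le
  have hf0 : ∀ x ∈ Icc α β, 0 ≤ f x := fun x hx => ha.le.trans (hfab x hx).1
  have hg0 : ∀ x ∈ Icc α β, 0 ≤ g x := fun x hx => hb.le.trans (hgab x hx).1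
  have hA : 0 ≤ A := (hf0 α (left_mem_Icc.2 hαβ)).trans (hfab α (left_mem_Icc.2 hαβ)).2
  have hB : 0 ≤ B := (hg0 α (left_mem_Icc.2 hαβ)).trans (hgab α (left_mem_Icc.2 hαβ)).2
  have hfgw_nonneg := integral_mul_nonneg_of_antitoneOn hαβ
    (fun x hx y hy hxy => mul_le_mul (hf hx hy hxy) (hg hx hy hxy) (hg0 y hy) (hf0 x hx))
    (fun x hx => mul_nonneg (hf0 x hx) (hg0 x hx)) hw hP
  have hfqw_nonneg := integral_mul_nonneg_of_antitoneOn hαβ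
    (fun x hx y hy hxy => Real.rpow_le_rpow (hf0 y hy) (hf hx hy hxy) (by linarith))
    (fun x hx => Real.rpow_nonneg (hf0 x hx) q) hw hP
  have hgpw_nonneg := integral_mul_nonneg_of_antitoneOn hαβ
    (fun x hx y hy hxy => Real.rpow_le_rpow (hg0 y hy) (hg hx hy hxy) (by linarith))
    (fun x hx => Real.rpow_nonneg (hg0 x hx) p) hw hP
  have hfqw_le := integral_rpow_mul_le_of_antitoneOn hαβ hq.le hb hf hg hf0
    (fun x hx => (hfab x hx).2) (fun x hx => (hgab x hx).1) hw hP hfqw hfgw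
  have hgpw_le :
      ∫ x in α..β, g x ^ p * w x ≤ p * B ^ (p - 1) / a * ∫ x in α..β, f x * g x * w x := by
    simpa only [mul_comm (g _) (f _)] using integral_rpow_mul_le_of_antitoneOn hαβ hp.le ha hg hf
      hg0 (fun x hx => (hgab x hx).2) (fun x hx => (hfab x hx).1) hw hP hgpw
      (by simpa only [mul_comm (f _) (g _)] using hfgw)
  rw [← Real.mul_rpow_sub_one_div_rpow_mul_eq ha.le hA hb.le hB (by linarith) (by linarith) hpq]
  exact Real.rpow_mul_rpow_le_of_le_mul hfqw_nonneg hgpw_nonneg hfgw_nonneg (by positivity)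
    (by positivity) (by positivity) (by positivity) (by linarith) hfqw_le hgpw_le

theorem stmt_15 (α β a A b B p q : ℝ) (hab : α < β) (w f g : ℝ → ℝ)
    (hw : IntervalIntegrable w volume α β)
    (hP : ∀ x ∈ Set.Icc α β, 0 ≤ ∫ t in α..x, w t)
    (hf : AntitoneOn f (Set.Icc α β))
    (hfdiff : DifferentiableOn ℝ f (Set.Icc α β))
    (hg : AntitoneOn g (Set.Icc α β))
    (hgdiff : DifferentiableOn ℝ g (Set.Icc α β))
    (ha : 0 < a) (hb : 0 < b)
    (hfab : ∀ x ∈ Set.Icc α β, a ≤ f x ∧ f x ≤ A)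
    (hgab : ∀ x ∈ Set.Icc α β, b ≤ g x ∧ g x ≤ B)
    (hp : 1 < p) (hq : 1 < q) (hpq : 1 / p + 1 / q = 1)
    (hfqw : IntervalIntegrable (fun x => f x ^ q * w x) volume α β)
    (hgpw : IntervalIntegrable (fun x => g x ^ p * w x) volume α β)
    (hfgw : IntervalIntegrable (fun x => f x * g x * w x) volume α β) :
    (∫ x in α..β, f x ^ q * w x) ^ (1 / q) * (∫ x in α..β, g x ^ p * w x) ^ (1 / p) ≤
      (p * A / a) ^ (1 / p) * (q * B / b) ^ (1 / q) * ∫ x in α..β, f x * g x * w x :=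
  stmt_15_general α β a A b B p q hab w f g hw hP hf hg ha hb hfab hgab hp hq hpq hfqw hgpw hfgw
end
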